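/- arXiv:1205.3189 — 8 statements merged into one kernel-verified Lean document; each statement's English description precedes it below -/
import Mathlib

section
/- Let p > 1 and C₁ > 0. There is a constant C (depending only on p and C₁) such that for every function φ : ℝ → ℝ with |φ(t)| ≤ C₁ (1+|t|)^{−p} for all t ∈ ℝ, every integer j ≥ 0, every integer l, and every θ ∈ ℝ, the periodized sum satisfies Σ_{k∈ℤ} |φ(2^j θ − l + 2^j k)| ≤ C (1 + D)^{−(p−1)}, where D := inf_{k∈ℤ} |2^j θ − l + 2^j k|. -/
/-!
Choose the lattice point `k₀` with `|x + T k₀| ≤ T / 2`. Since `T ≥ 1`, every other point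
satisfies `(1 + D) (1 + |k - k₀|) ≤ 3 (1 + |x + T k|)`, so the periodized sum is dominated by
`3 ^ p (1 + D) ^ (-p) ∑ₘ (1 + |m|) ^ (-p)`, which is even decay of order `p`.
-/

open Real

lemma summable_one_add_abs_int_rpow_neg {p : ℝ} (hp : 1 < p) :
    Summable fun m : ℤ => (1 + |(m : ℝ)|) ^ (-p) := by
  have hnat : Summable fun n : ℕ => ((n : ℝ) + 1) ^ (-p) := by
    simpa using (summable_nat_add_iff 1).mpr (Real.summable_nat_rpow.mpr (by linarith : -p < -1))
  refine .of_nat_of_neg ?_ ?_ <;> simpa [add_comm] using hnat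

lemma exists_abs_add_mul_int_le_half {T : ℝ} (hT : 0 < T) (x : ℝ) :
    ∃ k : ℤ, |x + T * k| ≤ T / 2 := by
  refine ⟨-round (x / T), ?_⟩
  have h : x + T * (-round (x / T) : ℤ) = T * (x / T - round (x / T)) := by
    push_cast; field_simp; ring
  rw [h, abs_mul, abs_of_pos hT]
  nlinarith [abs_sub_round (x / T)]

lemma one_add_mul_one_add_abs_sub_le {T D x : ℝ} {k₀ : ℤ} (hT : 1 ≤ T) (hD : 0 ≤ D)
    (hD₀ : D ≤ |x + T * k₀|) (hk₀ : |x + T * k₀| ≤ T / 2) (k : ℤ) :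
    (1 + D) * (1 + |((k - k₀ : ℤ) : ℝ)|) ≤ 3 * (1 + |x + T * k|) := by
  obtain rfl | hk := eq_or_ne k k₀
  · simp only [sub_self, Int.cast_zero, abs_zero]
    linarith
  have hm : 1 ≤ |((k - k₀ : ℤ) : ℝ)| := by
    rw [← Int.cast_abs]; exact_mod_cast Int.one_le_abs (sub_ne_zero.mpr hk)
  have hshift : T * |((k - k₀ : ℤ) : ℝ)| ≤ |x + T * k| + |x + T * k₀| := by
    have : T * ((k - k₀ : ℤ) : ℝ) = (x + T * k) - (x + T * k₀) := by push_cast; ring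
    rw [← abs_of_pos (by linarith : 0 < T), ← abs_mul, this, abs_of_pos (by linarith : 0 < T)]
    exact abs_sub _ _
  nlinarith

theorem tsum_abs_comp_add_mul_int_le {p C₁ T : ℝ} {φ : ℝ → ℝ} (hp : 1 < p) (hT : 1 ≤ T)
    (hφ : ∀ t, |φ t| ≤ C₁ * (1 + |t|) ^ (-p)) (x : ℝ) :
    ∑' k : ℤ, |φ (x + T * k)| ≤
      C₁ * 3 ^ p * (∑' m : ℤ, (1 + |(m : ℝ)|) ^ (-p)) * (1 + ⨅ k : ℤ, |x + T * k|) ^ (-p) := by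
  have hC₁ : 0 ≤ C₁ := by
    have h := (abs_nonneg _).trans (hφ 0)
    rwa [abs_zero, add_zero, one_rpow, mul_one] at h
  set D := ⨅ k : ℤ, |x + T * k|
  have hD : 0 ≤ D := Real.iInf_nonneg fun _ => abs_nonneg _
  obtain ⟨k₀, hk₀⟩ := exists_abs_add_mul_int_le_half (by linarith : 0 < T) x
  have hD₀ : D ≤ |x + T * k₀| := ciInf_le ⟨0, by rintro _ ⟨k, rfl⟩; exact abs_nonneg _⟩ k₀
  set w : ℤ → ℝ := fun m => (1 + |(m : ℝ)|) ^ (-p)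
  have hw : Summable w := summable_one_add_abs_int_rpow_neg hp
  have hbound : ∀ k : ℤ, |φ (x + T * k)| ≤ C₁ * 3 ^ p * (1 + D) ^ (-p) * w (k - k₀) := by
    intro k
    have hgeo := one_add_mul_one_add_abs_sub_le hT hD hD₀ hk₀ k
    calc |φ (x + T * k)| ≤ C₁ * (1 + |x + T * k|) ^ (-p) := hφ _
      _ = C₁ * 3 ^ p * (3 * (1 + |x + T * k|)) ^ (-p) := by
        rw [mul_rpow (by norm_num) (by positivity), rpow_neg (by norm_num : (0:ℝ) ≤ 3)]
        field_simp
      _ ≤ C₁ * 3 ^ p * ((1 + D) * (1 + |((k - k₀ : ℤ) : ℝ)|)) ^ (-p) :=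
        mul_le_mul_of_nonneg_left
          (rpow_le_rpow_of_nonpos (by positivity) hgeo (by linarith)) (by positivity)
      _ = C₁ * 3 ^ p * (1 + D) ^ (-p) * w (k - k₀) := by
        rw [mul_rpow (by positivity) (by positivity)]
        ring
  have hshift : Summable fun k : ℤ => w (k - k₀) := (Equiv.subRight k₀).summable_iff.mpr hw
  calc ∑' k : ℤ, |φ (x + T * k)| ≤ ∑' k : ℤ, C₁ * 3 ^ p * (1 + D) ^ (-p) * w (k - k₀) :=
        Summable.tsum_le_tsum hbound
          (.of_nonneg_of_le (fun _ => abs_nonneg _) hbound (hshift.mul_left _)) (hshift.mul_left _)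
    _ = C₁ * 3 ^ p * (∑' m : ℤ, w m) * (1 + D) ^ (-p) := by
        rw [tsum_mul_left, ← (Equiv.subRight k₀).tsum_eq w]
        simp only [Equiv.subRight_apply]
        ring

/-- Decay estimate for periodized vaguelets: if `φ` decays like
`C₁ (1+|t|)^{-p}`, then its 1-periodization at dyadic scale `2^{-j}` and location `l 2^{-j}`
decays with exponent `p - 1` in the normalized circle distance
`D = inf_{k ∈ ℤ} |2^j θ - l + 2^j k|`. -/
theorem periodized_vaguelet_decay (p C₁ : ℝ) (hp : 1 < p) (hC₁ : 0 < C₁) :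
    ∃ C : ℝ, 0 < C ∧ ∀ φ : ℝ → ℝ,
      (∀ t : ℝ, |φ t| ≤ C₁ * (1 + |t|) ^ (-p)) →
      ∀ (j : ℕ) (l : ℤ) (θ : ℝ),
        (∑' k : ℤ, |φ ((2:ℝ) ^ j * θ - (l : ℝ) + (2:ℝ) ^ j * (k : ℝ))|) ≤
          C * (1 + ⨅ k : ℤ, |(2:ℝ) ^ j * θ - (l : ℝ) + (2:ℝ) ^ j * (k : ℝ)|) ^ (-(p - 1)) := by
  have hS : 0 < ∑' m : ℤ, (1 + |(m : ℝ)|) ^ (-p) :=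
    (summable_one_add_abs_int_rpow_neg hp).tsum_pos (fun _ => by positivity) 0 (by simp)
  refine ⟨C₁ * 3 ^ p * ∑' m : ℤ, (1 + |(m : ℝ)|) ^ (-p), by positivity, ?_⟩
  intro φ hφ j l θ
  have hD : 0 ≤ ⨅ k : ℤ, |(2:ℝ) ^ j * θ - l + 2 ^ j * k| :=
    Real.iInf_nonneg fun _ => abs_nonneg _
  refine (tsum_abs_comp_add_mul_int_le hp (one_le_pow₀ one_le_two) hφ _).trans ?_
  exact mul_le_mul_of_nonneg_left
    (rpow_le_rpow_of_exponent_le (by linarith) (by linarith)) (by positivity)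
end

section
/- Let m₀ : ℝ → ℂ be measurable with |m₀(ξ)|² + |m₀(ξ+π)|² = 1 for all ξ ∈ ℝ, and let F : ℝ → ℂ be bounded and measurable with F(2ξ) = m₀(ξ)·F(ξ) for all ξ ∈ ℝ. Then for every integer j: ∫_{2^j}^{2^{j+1}} |F(ξ)|²/ξ dξ = ∫_{2^j}^{2^{j+1}} |m₀(ξ+π)|²·|F(ξ)|²/ξ dξ + ∫_{2^{j+1}}^{2^{j+2}} |F(ξ)|²/ξ dξ. -/
open MeasureTheory

/-! Substituting `ξ = 2η` turns the block `[2^(j+1), 2^(j+2)]` of `|F(ξ)|²/ξ` into the block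
`[2^j, 2^(j+1)]` of `|F(2η)|²/η = |m₀(η)|²|F(η)|²/η`, and `|m₀|² + |m₀(·+π)|² = 1` makes the two
integrands on that block add up to `|F|²/ξ`. -/

theorem intervalIntegral.integral_eq_integral_sub_smul_comp_mul_add
    {E : Type*} [NormedAddCommGroup E] [NormedSpace ℝ E] {g : ℝ → E} {a b c : ℝ} (hc : c ≠ 0)
    (hg : IntervalIntegrable g volume a b) (hgc : IntervalIntegrable g volume (c * a) (c * b)) :
    ∫ x in a..b, g x = (∫ x in a..b, g x - c • g (c * x)) + ∫ x in (c * a)..(c * b), g x := by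
  have hcomp : IntervalIntegrable (fun x => c • g (c * x)) volume a b := by
    simpa [hc, Pi.smul_def] using (hgc.comp_mul_left (c := c)).smul c
  rw [intervalIntegral.integral_sub hg hcomp, intervalIntegral.integral_smul,
    intervalIntegral.smul_integral_comp_mul_left, sub_add_cancel]

theorem intervalIntegrable_div_id_of_norm_le {f : ℝ → ℝ} (hf : AEStronglyMeasurable f) {B : ℝ}
    (hB : ∀ x, ‖f x‖ ≤ B) {a b : ℝ} (h0 : (0 : ℝ) ∉ Set.uIcc a b) :
    IntervalIntegrable (fun x => f x / x) volume a b := by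
  have hfab : IntervalIntegrable f volume a b :=
    (intervalIntegrable_iff.2 <| Measure.integrableOn_of_bounded (M := B)
      ((measure_mono Set.uIoc_subset_uIcc).trans_lt measure_Icc_lt_top).ne hf
      (Filter.Eventually.of_forall hB))
  simpa only [div_eq_mul_inv] using
    hfab.mul_continuousOn (continuousOn_inv₀.mono fun x hx (hx0 : x = 0) => h0 (hx0 ▸ hx))

theorem filter_block_identity_general (m₀ F : ℝ → ℂ)
    (hunit : ∀ ξ : ℝ, ‖m₀ ξ‖ ^ 2 + ‖m₀ (ξ + Real.pi)‖ ^ 2 = 1)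
    (hFmeas : Measurable F) (B : ℝ) (hFbdd : ∀ ξ : ℝ, ‖F ξ‖ ≤ B)
    (href : ∀ ξ : ℝ, F (2 * ξ) = m₀ ξ * F ξ) (j : ℤ) :
    ∫ ξ in ((2:ℝ) ^ j)..((2:ℝ) ^ (j + 1)), ‖F ξ‖ ^ 2 / ξ =
      (∫ ξ in ((2:ℝ) ^ j)..((2:ℝ) ^ (j + 1)), ‖m₀ (ξ + Real.pi)‖ ^ 2 * ‖F ξ‖ ^ 2 / ξ) +
        ∫ ξ in ((2:ℝ) ^ (j + 1))..((2:ℝ) ^ (j + 2)), ‖F ξ‖ ^ 2 / ξ := by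
  have hint : ∀ k : ℤ, IntervalIntegrable (fun ξ => ‖F ξ‖ ^ 2 / ξ) volume (2 ^ k) (2 ^ (k + 1)) :=
    fun k => intervalIntegrable_div_id_of_norm_le (hFmeas.norm.pow_const 2).aestronglyMeasurable
      (fun ξ => by simpa using pow_le_pow_left₀ (norm_nonneg _) (hFbdd ξ) 2)
      (Set.notMem_uIcc_of_lt (zpow_pos two_pos k) (zpow_pos two_pos (k + 1)))
  have hdouble : ∀ k : ℤ, (2 : ℝ) * 2 ^ k = 2 ^ (k + 1) := fun k => by
    rw [zpow_add_one₀ two_ne_zero, mul_comm]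
  have hdefect : ∀ ξ : ℝ, ‖m₀ (ξ + Real.pi)‖ ^ 2 * ‖F ξ‖ ^ 2 = ‖F ξ‖ ^ 2 - ‖F (2 * ξ)‖ ^ 2 := by
    intro ξ
    rw [href, norm_mul, mul_pow]
    linear_combination ‖F ξ‖ ^ 2 * hunit ξ
  rw [intervalIntegral.integral_eq_integral_sub_smul_comp_mul_add two_ne_zero (hint j),
    hdouble, hdouble, (by ring : j + 1 + 1 = j + 2)]
  · congr 2
    ext ξ
    rw [hdefect, smul_eq_mul, ← mul_div_assoc, mul_div_mul_left _ _ (two_ne_zero' ℝ), sub_div]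
  · simpa only [hdouble] using hint (j + 1)

/-- One-block identity for a wavelet filter `m₀` (with
`|m₀(ξ)|² + |m₀(ξ+π)|² = 1`) and a bounded measurable `F` satisfying the refinement
relation `F(2ξ) = m₀(ξ) F(ξ)`:
`∫_{2^j}^{2^{j+1}} |F|²/ξ = ∫_{2^j}^{2^{j+1}} |m₀(·+π)|²|F|²/ξ + ∫_{2^{j+1}}^{2^{j+2}} |F|²/ξ`. -/
theorem filter_block_identity (m₀ F : ℝ → ℂ)
    (hm₀ : Measurable m₀)
    (hunit : ∀ ξ : ℝ, ‖m₀ ξ‖ ^ 2 + ‖m₀ (ξ + Real.pi)‖ ^ 2 = 1)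
    (hFmeas : Measurable F) (B : ℝ) (hFbdd : ∀ ξ : ℝ, ‖F ξ‖ ≤ B)
    (href : ∀ ξ : ℝ, F (2 * ξ) = m₀ ξ * F ξ) (j : ℤ) :
    ∫ ξ in ((2:ℝ) ^ j)..((2:ℝ) ^ (j + 1)), ‖F ξ‖ ^ 2 / ξ =
      (∫ ξ in ((2:ℝ) ^ j)..((2:ℝ) ^ (j + 1)), ‖m₀ (ξ + Real.pi)‖ ^ 2 * ‖F ξ‖ ^ 2 / ξ) +
        ∫ ξ in ((2:ℝ) ^ (j + 1))..((2:ℝ) ^ (j + 2)), ‖F ξ‖ ^ 2 / ξ :=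
  filter_block_identity_general m₀ F hunit hFmeas B hFbdd href j
end

section
/- Let m₀ : ℝ → ℂ be measurable with |m₀(ξ)|² + |m₀(ξ+π)|² = 1 for all ξ ∈ ℝ, and let F : ℝ → ℂ be bounded and measurable with F(2ξ) = m₀(ξ)·F(ξ) for all ξ ∈ ℝ. Assume additionally that ∫_{2^J}^{2^{J+1}} |F(ξ)|²/ξ dξ → 0 as J → +∞. Then for every integer n: ∫_{2^{−n}}^{2^{−n+1}} |F(ξ)|²/ξ dξ = ∫_{2^{−n}}^{∞} |m₀(ξ+π)|²·|F(ξ)|²/ξ dξ. -/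
/-!
Since `|m₀ ξ|² + |m₀ (ξ + π)|² = 1` and `|F (2ξ)|² = |m₀ ξ|² |F ξ|²`, the integrand
`|m₀ (ξ + π)|² |F ξ|² / ξ` equals `|F ξ|² / ξ - |F (2ξ)|² / ξ`. The substitution `ξ ↦ 2ξ` then
telescopes its integral over `[a, b]` (with `0 < a, b`) into the difference of two dyadic blocks
`∫_a^{2a} |F|²/ξ - ∫_b^{2b} |F|²/ξ`. Taking `b = 2^J → ∞` the second block tends to `0`, and since
the integrand is nonnegative the integrals over `[a, 2^J]` converge to the integral over `(a, ∞)`.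
-/

open MeasureTheory Filter Set intervalIntegral Topology

theorem tendsto_two_zpow_atTop : Tendsto (fun J : ℤ => (2 : ℝ) ^ J) atTop atTop := by
  refine tendsto_atTop_atTop.2 fun b => ⟨⌈b⌉₊, fun J hJ => ?_⟩
  calc b ≤ ⌈b⌉₊ := Nat.le_ceil b
    _ ≤ (2 : ℝ) ^ (⌈b⌉₊ : ℤ) := by
        rw [zpow_natCast]; exact_mod_cast (Nat.lt_two_pow_self).le
    _ ≤ 2 ^ J := zpow_le_zpow_right₀ one_le_two hJ

theorem integral_Ioi_eq_of_tendsto_intervalIntegral_of_nonneg {ι : Type*} {l : Filter ι}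
    [l.NeBot] [l.IsCountablyGenerated] {g : ℝ → ℝ} {a L : ℝ} {b : ι → ℝ}
    (hg : ∀ x, a ≤ x → 0 ≤ g x)
    (hgi : ∀ i, IntervalIntegrable g volume a (b i)) (hb : Tendsto b l atTop)
    (hL : Tendsto (fun i => ∫ x in a..b i, g x) l (𝓝 L)) :
    ∫ x in Ioi a, g x = L := by
  have hnorm : ∀ᶠ i in l, ∫ x in a..b i, ‖g x‖ = ∫ x in a..b i, g x := by
    filter_upwards [hb.eventually_ge_atTop a] with i hi
    refine integral_congr fun x hx => Real.norm_of_nonneg (hg x ?_)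
    exact (uIcc_of_le hi ▸ hx).1
  have hint : IntegrableOn g (Ioi a) :=
    integrableOn_Ioi_of_intervalIntegral_norm_tendsto L a (fun i => (hgi i).1) hb
      (hL.congr' (hnorm.mono fun _ h => h.symm))
  exact tendsto_nhds_unique (intervalIntegral_tendsto_integral_Ioi a hint hb) hL

section

variable {F : ℝ → ℂ} {a b : ℝ}

theorem intervalIntegrable_norm_sq_div (hF : Measurable F) {B : ℝ} (hFB : ∀ ξ, ‖F ξ‖ ≤ B)
    (ha : 0 < a) (hb : 0 < b) :
    IntervalIntegrable (fun ξ => ‖F ξ‖ ^ 2 / ξ) volume a b := by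
  have hsq : IntervalIntegrable (fun ξ => ‖F ξ‖ ^ 2) volume a b := by
    rw [intervalIntegrable_iff]
    refine Measure.integrableOn_of_bounded (M := B ^ 2) measure_Ioc_lt_top.ne
      (hF.norm.pow_const 2).aestronglyMeasurable (ae_of_all _ fun ξ => ?_)
    rw [norm_pow, norm_norm]
    exact pow_le_pow_left₀ (norm_nonneg _) (hFB ξ) 2
  simp_rw [div_eq_mul_inv]
  refine hsq.mul_continuousOn (continuousOn_inv₀.mono fun x hx => ?_)
  exact (lt_of_lt_of_le (lt_min ha hb) hx.1).ne'

theorem norm_sq_shift_mul_norm_sq_div_eq {m₀ : ℝ → ℂ}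
    (hunit : ∀ ξ : ℝ, ‖m₀ ξ‖ ^ 2 + ‖m₀ (ξ + Real.pi)‖ ^ 2 = 1)
    (href : ∀ ξ : ℝ, F (2 * ξ) = m₀ ξ * F ξ) :
    (fun ξ => ‖m₀ (ξ + Real.pi)‖ ^ 2 * ‖F ξ‖ ^ 2 / ξ) =
      fun ξ => ‖F ξ‖ ^ 2 / ξ - 2 * (‖F (2 * ξ)‖ ^ 2 / (2 * ξ)) := by
  ext ξ
  rw [href, norm_mul, ← mul_div_assoc, mul_div_mul_left _ _ two_ne_zero, ← sub_div]
  congr 1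
  linear_combination ‖F ξ‖ ^ 2 * hunit ξ

theorem intervalIntegrable_norm_sq_comp_two_mul_div (hF : Measurable F) {B : ℝ}
    (hFB : ∀ ξ, ‖F ξ‖ ≤ B) (ha : 0 < a) (hb : 0 < b) :
    IntervalIntegrable (fun ξ => 2 * (‖F (2 * ξ)‖ ^ 2 / (2 * ξ))) volume a b := by
  simpa using ((intervalIntegrable_norm_sq_div hF hFB (by positivity : 0 < 2 * a)
    (by positivity : 0 < 2 * b)).comp_mul_left (c := 2)).const_mul 2

theorem intervalIntegrable_norm_sq_shift_mul_norm_sq_div {m₀ : ℝ → ℂ}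
    (hunit : ∀ ξ : ℝ, ‖m₀ ξ‖ ^ 2 + ‖m₀ (ξ + Real.pi)‖ ^ 2 = 1)
    (href : ∀ ξ : ℝ, F (2 * ξ) = m₀ ξ * F ξ) (hF : Measurable F) {B : ℝ}
    (hFB : ∀ ξ, ‖F ξ‖ ≤ B) (ha : 0 < a) (hb : 0 < b) :
    IntervalIntegrable (fun ξ => ‖m₀ (ξ + Real.pi)‖ ^ 2 * ‖F ξ‖ ^ 2 / ξ) volume a b := by
  rw [norm_sq_shift_mul_norm_sq_div_eq hunit href]
  exact (intervalIntegrable_norm_sq_div hF hFB ha hb).sub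
    (intervalIntegrable_norm_sq_comp_two_mul_div hF hFB ha hb)

theorem integral_norm_sq_shift_mul_norm_sq_div {m₀ : ℝ → ℂ}
    (hunit : ∀ ξ : ℝ, ‖m₀ ξ‖ ^ 2 + ‖m₀ (ξ + Real.pi)‖ ^ 2 = 1)
    (href : ∀ ξ : ℝ, F (2 * ξ) = m₀ ξ * F ξ) (hF : Measurable F) {B : ℝ}
    (hFB : ∀ ξ, ‖F ξ‖ ≤ B) (ha : 0 < a) (hb : 0 < b) :
    ∫ ξ in a..b, ‖m₀ (ξ + Real.pi)‖ ^ 2 * ‖F ξ‖ ^ 2 / ξ =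
      (∫ ξ in a..2 * a, ‖F ξ‖ ^ 2 / ξ) - ∫ ξ in b..2 * b, ‖F ξ‖ ^ 2 / ξ := by
  have hint {c d : ℝ} (hc : 0 < c) (hd : 0 < d) := intervalIntegrable_norm_sq_div hF hFB hc hd
  rw [norm_sq_shift_mul_norm_sq_div_eq hunit href,
    integral_sub (hint ha hb) (intervalIntegrable_norm_sq_comp_two_mul_div hF hFB ha hb),
    intervalIntegral.integral_const_mul, ← smul_eq_mul,
    smul_integral_comp_mul_left (f := fun x => ‖F x‖ ^ 2 / x),
    integral_interval_sub_interval_comm (hint ha hb) (hint (by positivity) (by positivity))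
      (hint ha (by positivity))]

end

theorem filter_telescoped_identity_general (m₀ F : ℝ → ℂ)
    (hunit : ∀ ξ : ℝ, ‖m₀ ξ‖ ^ 2 + ‖m₀ (ξ + Real.pi)‖ ^ 2 = 1)
    (hFmeas : Measurable F) (B : ℝ) (hFbdd : ∀ ξ : ℝ, ‖F ξ‖ ≤ B)
    (href : ∀ ξ : ℝ, F (2 * ξ) = m₀ ξ * F ξ)
    (hdecay : Tendsto (fun J : ℤ => ∫ ξ in ((2:ℝ) ^ J)..((2:ℝ) ^ (J + 1)), ‖F ξ‖ ^ 2 / ξ)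
      atTop (nhds 0))
    (n : ℤ) :
    ∫ ξ in ((2:ℝ) ^ (-n))..((2:ℝ) ^ (-n + 1)), ‖F ξ‖ ^ 2 / ξ =
      ∫ ξ in Set.Ioi ((2:ℝ) ^ (-n)), ‖m₀ (ξ + Real.pi)‖ ^ 2 * ‖F ξ‖ ^ 2 / ξ := by
  have hpos (J : ℤ) : (0 : ℝ) < 2 ^ J := zpow_pos two_pos J
  have hdouble (J : ℤ) : (2 : ℝ) ^ (J + 1) = 2 * 2 ^ J := by
    rw [zpow_add_one₀ two_ne_zero, mul_comm]
  have htelescoped : (fun J : ℤ => ∫ ξ in (2 : ℝ) ^ (-n)..2 ^ J,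
      ‖m₀ (ξ + Real.pi)‖ ^ 2 * ‖F ξ‖ ^ 2 / ξ) = fun J =>
      (∫ ξ in (2 : ℝ) ^ (-n)..2 ^ (-n + 1), ‖F ξ‖ ^ 2 / ξ) -
        ∫ ξ in (2 : ℝ) ^ J..2 ^ (J + 1), ‖F ξ‖ ^ 2 / ξ := by
    ext J
    rw [integral_norm_sq_shift_mul_norm_sq_div hunit href hFmeas hFbdd (hpos _) (hpos J),
      hdouble, hdouble]
  refine (integral_Ioi_eq_of_tendsto_intervalIntegral_of_nonneg (fun ξ hξ => ?_)
    (fun J => intervalIntegrable_norm_sq_shift_mul_norm_sq_div hunit href hFmeas hFbdd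
      (hpos _) (hpos J)) tendsto_two_zpow_atTop ?_).symm
  · have : 0 ≤ ξ := (hpos _).le.trans hξ
    positivity
  · rw [htelescoped]
    simpa using hdecay.const_sub _

/-- Telescoped identity for a wavelet filter `m₀` and a bounded measurable
`F` with `F(2ξ) = m₀(ξ) F(ξ)`, assuming the dyadic-block integrals tend to `0` at `+∞`:
`∫_{2^{-n}}^{2^{-n+1}} |F|²/ξ = ∫_{2^{-n}}^{∞} |m₀(·+π)|²|F|²/ξ` for every integer `n`. -/
theorem filter_telescoped_identity (m₀ F : ℝ → ℂ)
    (hm₀ : Measurable m₀)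
    (hunit : ∀ ξ : ℝ, ‖m₀ ξ‖ ^ 2 + ‖m₀ (ξ + Real.pi)‖ ^ 2 = 1)
    (hFmeas : Measurable F) (B : ℝ) (hFbdd : ∀ ξ : ℝ, ‖F ξ‖ ≤ B)
    (href : ∀ ξ : ℝ, F (2 * ξ) = m₀ ξ * F ξ)
    (hdecay : Tendsto (fun J : ℤ => ∫ ξ in ((2:ℝ) ^ J)..((2:ℝ) ^ (J + 1)), ‖F ξ‖ ^ 2 / ξ)
      atTop (nhds 0))
    (n : ℤ) :
    ∫ ξ in ((2:ℝ) ^ (-n))..((2:ℝ) ^ (-n + 1)), ‖F ξ‖ ^ 2 / ξ =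
      ∫ ξ in Set.Ioi ((2:ℝ) ^ (-n)), ‖m₀ (ξ + Real.pi)‖ ^ 2 * ‖F ξ‖ ^ 2 / ξ :=
  filter_telescoped_identity_general m₀ F hunit hFmeas B hFbdd href hdecay n
end

section
/- Let m₀ : ℝ → ℂ be measurable with |m₀(ξ)|² + |m₀(ξ+π)|² = 1 for all ξ ∈ ℝ. Let F : ℝ → ℂ be bounded and measurable with F(2ξ) = m₀(ξ)·F(ξ) for all ξ ∈ ℝ, continuous at 0 with F(0) = 1, and such that ∫_{2^J ≤ |ξ| ≤ 2^{J+1}} |F(ξ)|²/|ξ| dξ → 0 as J → +∞. Define Φ̂ : ℝ → ℂ by Φ̂(2ξ) := e^{−iξ} · conj(m₀(ξ+π)) · F(ξ). Then ∫_ℝ |Φ̂(ξ)|²/|ξ| dξ = 2 ln 2. -/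
/-!
With `G = ‖F‖²`, the refinement equation and `|m₀(ξ)|² + |m₀(ξ+π)|² = 1` give
`‖Φ̂(ξ)‖² = G(ξ/2) - G(ξ) ≥ 0`, so the integral is a Frullani integral for the dilation-invariant
measure `dξ/|ξ|`. Over `2a ≤ |ξ| < 2b` it telescopes to the `G dξ/|ξ|`-mass of `a ≤ |ξ| < 2a`
minus that of `b ≤ |ξ| < 2b`. As `a → 0` the first term tends to `G(0) ∫_{1 ≤ |η| < 2} dη/|η| =
2 log 2` by continuity of `G` at `0`, as `b → ∞` the second tends to `0` by the decay hypothesis,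
and since the integrand is nonnegative these truncations converge to the integral over `ℝ`.
-/

open MeasureTheory Filter Set Topology

def annulus (a b : ℝ) : Set ℝ := abs ⁻¹' Ico a b

lemma measurableSet_annulus (a b : ℝ) : MeasurableSet (annulus a b) :=
  continuous_abs.measurable measurableSet_Ico

lemma annulus_union_annulus {a b c : ℝ} (hab : a ≤ b) (hbc : b ≤ c) :
    annulus a b ∪ annulus b c = annulus a c := by
  rw [annulus, annulus, ← preimage_union, Ico_union_Ico_eq_Ico hab hbc, annulus]

lemma disjoint_annulus (a b c : ℝ) : Disjoint (annulus a b) (annulus b c) :=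
  (Ico_disjoint_Ico_same).preimage abs

lemma mul_mem_annulus_iff {a b c ξ : ℝ} (hc : 0 < c) :
    c * ξ ∈ annulus (c * a) (c * b) ↔ ξ ∈ annulus a b := by
  simp only [annulus, mem_preimage, mem_Ico, abs_mul, abs_of_pos hc,
    mul_le_mul_iff_right₀ hc, mul_lt_mul_iff_right₀ hc]

lemma volume_annulus_lt_top (a b : ℝ) : volume (annulus a b) < ⊤ :=
  (measure_mono fun _ hξ => abs_le.1 (le_of_lt hξ.2)).trans_lt measure_Icc_lt_top

lemma preimage_abs_Icc_ae_eq_annulus (a b : ℝ) : abs ⁻¹' Icc a b =ᵐ[volume] annulus a b := by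
  refine ae_eq_set.2 ⟨measure_mono_null (t := {b, -b}) ?_ ((toFinite _).measure_zero _), ?_⟩
  · rintro ξ ⟨⟨ha, hb⟩, hξ⟩
    exact eq_or_eq_neg_of_abs_eq (hb.eq_of_not_lt fun h => hξ ⟨ha, h⟩)
  · rw [annulus, sdiff_eq_empty.2 (preimage_mono Ico_subset_Icc_self), measure_empty]

lemma integrableOn_div_abs_annulus {G : ℝ → ℝ} (hG : Measurable G) {C : ℝ} (hC : ∀ ξ, |G ξ| ≤ C)
    {a : ℝ} (ha : 0 < a) (b : ℝ) : IntegrableOn (fun ξ => G ξ / |ξ|) (annulus a b) := by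
  refine Measure.integrableOn_of_bounded (M := C / a) (volume_annulus_lt_top a b).ne
    (hG.div continuous_abs.measurable).aestronglyMeasurable ?_
  filter_upwards [ae_restrict_mem (measurableSet_annulus a b)] with ξ hξ
  rw [Real.norm_eq_abs, abs_div, abs_abs]
  exact div_le_div₀ ((abs_nonneg _).trans (hC ξ)) (hC ξ) ha hξ.1

lemma setIntegral_annulus_comp_mul_div_abs (G : ℝ → ℝ) {c : ℝ} (hc : 0 < c) (a b : ℝ) :
    ∫ ξ in annulus a b, G (c * ξ) / |ξ| = ∫ ξ in annulus (c * a) (c * b), G ξ / |ξ| := by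
  have hindicator : (annulus a b).indicator (fun ξ => G (c * ξ) / |ξ|)
      = fun ξ => c * (annulus (c * a) (c * b)).indicator (fun ξ => G ξ / |ξ|) (c * ξ) := by
    ext ξ
    by_cases hξ : ξ ∈ annulus a b
    · rw [indicator_of_mem hξ, indicator_of_mem ((mul_mem_annulus_iff hc).2 hξ), abs_mul,
        abs_of_pos hc]
      field_simp
    · rw [indicator_of_notMem hξ, indicator_of_notMem (mt (mul_mem_annulus_iff hc).1 hξ), mul_zero]
  rw [← integral_indicator (measurableSet_annulus _ _), ← integral_indicator
    (measurableSet_annulus _ _), hindicator, integral_const_mul, Measure.integral_comp_mul_left,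
    abs_of_pos (inv_pos.2 hc), smul_eq_mul, mul_inv_cancel_left₀ hc.ne']

lemma setIntegral_annulus_one_div_abs {a b : ℝ} (ha : 0 < a) (hab : a ≤ b) :
    ∫ ξ in annulus a b, 1 / |ξ| = 2 * Real.log (b / a) := by
  have hIco : Ico a b ⊆ Ioi 0 := fun t ht => ha.trans_le ht.1
  calc ∫ ξ in annulus a b, 1 / |ξ|
      = ∫ ξ, (Ico a b).indicator (fun t => 1 / t) |ξ| := by
        rw [← integral_indicator (measurableSet_annulus a b)]
        rfl
    _ = 2 * ∫ t in Ico a b, 1 / t := by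
        rw [integral_comp_abs, setIntegral_indicator measurableSet_Ico, inter_eq_right.2 hIco]
    _ = 2 * Real.log (b / a) := by
        rw [integral_Ico_eq_integral_Ioo, ← integral_Ioc_eq_integral_Ioo,
          ← intervalIntegral.integral_of_le hab, integral_one_div_of_pos ha (ha.trans_le hab)]

lemma setIntegral_annulus_sub_comp_half_div_abs {G : ℝ → ℝ} (hG : Measurable G) {C : ℝ}
    (hC : ∀ ξ, |G ξ| ≤ C) {a b : ℝ} (ha : 0 < a) (hab : 2 * a ≤ b) :
    ∫ ξ in annulus (2 * a) (2 * b), (G (ξ / 2) - G ξ) / |ξ|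
      = (∫ ξ in annulus a (2 * a), G ξ / |ξ|) - ∫ ξ in annulus b (2 * b), G ξ / |ξ| := by
  have hGhalf : Measurable fun ξ => G (ξ / 2) := hG.comp (measurable_id.div_const 2)
  have hint : ∀ {a'} b', 0 < a' → IntegrableOn (fun ξ => G ξ / |ξ|) (annulus a' b') :=
    fun b' ha' => integrableOn_div_abs_annulus hG hC ha' b'
  have hhalf : ∫ ξ in annulus (2 * a) (2 * b), G (ξ / 2) / |ξ| = ∫ ξ in annulus a b, G ξ / |ξ| := by
    simp_rw [fun ξ : ℝ => div_eq_inv_mul ξ 2,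
      setIntegral_annulus_comp_mul_div_abs G (inv_pos.2 two_pos), inv_mul_cancel_left₀ (two_ne_zero' ℝ)]
  have hsplit_inner : annulus a (2 * a) ∪ annulus (2 * a) b = annulus a b :=
    annulus_union_annulus (by linarith) hab
  have hsplit_outer : annulus (2 * a) b ∪ annulus b (2 * b) = annulus (2 * a) (2 * b) :=
    annulus_union_annulus hab (by linarith)
  have hsub : ∫ ξ in annulus (2 * a) (2 * b), (G (ξ / 2) - G ξ) / |ξ|
      = (∫ ξ in annulus (2 * a) (2 * b), G (ξ / 2) / |ξ|)
        - ∫ ξ in annulus (2 * a) (2 * b), G ξ / |ξ| := by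
    simp_rw [sub_div]
    exact integral_sub (integrableOn_div_abs_annulus hGhalf (fun _ => hC _) (by positivity) _)
      (hint _ (by positivity))
  rw [hsub, hhalf, ← hsplit_inner, ← hsplit_outer,
    setIntegral_union (disjoint_annulus _ _ _) (measurableSet_annulus _ _) (hint _ ha)
      (hint _ (by positivity)),
    setIntegral_union (disjoint_annulus _ _ _) (measurableSet_annulus _ _) (hint _ (by positivity))
      (hint _ (by linarith))]
  ring

lemma tendsto_setIntegral_annulus_div_abs {G : ℝ → ℝ} (hG : Measurable G) {C : ℝ}
    (hC : ∀ ξ, |G ξ| ≤ C) (hG0 : ContinuousAt G 0) :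
    Tendsto (fun a => ∫ ξ in annulus a (2 * a), G ξ / |ξ|) (𝓝[>] 0)
      (𝓝 (2 * Real.log 2 * G 0)) := by
  have hscaled : Tendsto (fun a => ∫ η in annulus 1 2, G (a * η) / |η|) (𝓝 0)
      (𝓝 (∫ η in annulus 1 2, G 0 / |η|)) := by
    refine tendsto_integral_filter_of_dominated_convergence (fun η => C / |η|)
      (Eventually.of_forall fun a =>
        ((hG.comp (measurable_const_mul a)).div continuous_abs.measurable).aestronglyMeasurable)
      (Eventually.of_forall fun a => ae_of_all _ fun η => ?_)
      (integrableOn_div_abs_annulus (G := fun _ => C) measurable_const (fun _ => le_rfl) one_pos 2)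
      (ae_of_all _ fun η => (hG0.tendsto.comp ?_).div_const _)
    · rw [Real.norm_eq_abs, abs_div, abs_abs]
      exact div_le_div_of_nonneg_right (hC _) (abs_nonneg _)
    · simpa using (continuous_mul_const η).tendsto 0
  have hlim : ∫ η in annulus 1 2, G 0 / |η| = 2 * Real.log 2 * G 0 := by
    simp_rw [div_eq_mul_one_div (G 0)]
    rw [integral_const_mul, setIntegral_annulus_one_div_abs one_pos one_le_two, div_one, mul_comm]
  rw [← hlim]
  refine (hscaled.mono_left nhdsWithin_le_nhds).congr' ?_
  filter_upwards [self_mem_nhdsWithin] with a ha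
  rw [setIntegral_annulus_comp_mul_div_abs G ha, mul_one, mul_comm]

lemma aecover_annulus {ι : Type*} {l : Filter ι} {a b : ι → ℝ} (ha : Tendsto a l (𝓝 0))
    (hb : Tendsto b l atTop) : AECover volume l fun i => annulus (a i) (b i) where
  ae_eventually_mem := by
    filter_upwards [compl_mem_ae_iff.2 (measure_singleton (0 : ℝ))] with ξ hξ
    exact (ha.eventually (eventually_le_nhds (abs_pos.2 hξ))).and (hb.eventually_gt_atTop |ξ|)
  measurableSet _ := measurableSet_annulus _ _

theorem integral_sub_comp_half_div_abs {G : ℝ → ℝ} (hG : Measurable G) {C : ℝ}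
    (hC : ∀ ξ, |G ξ| ≤ C) (hmono : ∀ ξ, G ξ ≤ G (ξ / 2)) (hG0 : ContinuousAt G 0)
    (htail : Tendsto (fun n : ℕ => ∫ ξ in annulus (2 ^ n) (2 * 2 ^ n), G ξ / |ξ|) atTop (𝓝 0)) :
    ∫ ξ, (G (ξ / 2) - G ξ) / |ξ| = 2 * Real.log 2 * G 0 := by
  have hpow : Tendsto (fun n : ℕ => (2 : ℝ) ^ n) atTop atTop :=
    tendsto_pow_atTop_atTop_of_one_lt one_lt_two
  have hinv : Tendsto (fun n : ℕ => ((2 : ℝ) ^ n)⁻¹) atTop (𝓝[>] 0) :=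
    tendsto_nhdsWithin_iff.2 ⟨tendsto_inv_atTop_zero.comp hpow,
      Eventually.of_forall fun n => mem_Ioi.2 (by positivity)⟩
  have hcover : AECover volume atTop fun n : ℕ => annulus (2 * ((2 : ℝ) ^ n)⁻¹) (2 * 2 ^ n) :=
    aecover_annulus (by simpa using (tendsto_inv_atTop_zero.comp hpow).const_mul 2)
      (hpow.const_mul_atTop two_pos)
  refine hcover.integral_eq_of_tendsto_of_nonneg_ae _
    (ae_of_all _ fun ξ => div_nonneg (sub_nonneg.2 (hmono ξ)) (abs_nonneg ξ))
    (fun n => integrableOn_div_abs_annulus ((hG.comp (measurable_id.div_const 2)).sub hG)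
      (fun ξ => (abs_sub _ _).trans (add_le_add (hC _) (hC _)))
      (by positivity : (0 : ℝ) < 2 * (2 ^ n)⁻¹) _) ?_
  have hlim := ((tendsto_setIntegral_annulus_div_abs hG hC hG0).comp hinv).sub htail
  rw [sub_zero] at hlim
  refine hlim.congr' ?_
  filter_upwards [eventually_ge_atTop 1] with n hn
  have h2 : (2 : ℝ) ≤ 2 ^ n := by simpa using pow_le_pow_right₀ one_le_two hn
  refine (setIntegral_annulus_sub_comp_half_div_abs hG hC (by positivity) ?_).symm
  rw [← div_eq_mul_inv, div_le_iff₀ (by positivity)]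
  nlinarith

lemma norm_sq_wavelet {m F Φ : ℝ → ℂ} {η : ℝ}
    (hunit : ‖m η‖ ^ 2 + ‖m (η + Real.pi)‖ ^ 2 = 1) (href : F (2 * η) = m η * F η)
    (hΦ : Φ (2 * η) =
      Complex.exp (-(η : ℂ) * Complex.I) * (starRingEnd ℂ) (m (η + Real.pi)) * F η) :
    ‖Φ (2 * η)‖ ^ 2 = ‖F η‖ ^ 2 - ‖F (2 * η)‖ ^ 2 := by
  rw [hΦ, href, norm_mul, norm_mul, norm_mul, ← Complex.ofReal_neg, Complex.norm_exp_ofReal_mul_I,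
    Complex.norm_conj]
  linear_combination ‖F η‖ ^ 2 * hunit

lemma tendsto_setIntegral_annulus_of_tendsto_Icc {f : ℝ → ℝ}
    (h : Tendsto (fun J : ℤ => ∫ ξ in {ξ : ℝ | (2:ℝ) ^ J ≤ |ξ| ∧ |ξ| ≤ (2:ℝ) ^ (J + 1)}, f ξ)
      atTop (𝓝 0)) :
    Tendsto (fun n : ℕ => ∫ ξ in annulus (2 ^ n) (2 * 2 ^ n), f ξ) atTop (𝓝 0) := by
  refine (h.comp tendsto_natCast_atTop_atTop).congr fun n => ?_
  change ∫ ξ in abs ⁻¹' Icc _ _, f ξ = _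
  rw [setIntegral_congr_set (preimage_abs_Icc_ae_eq_annulus _ _), zpow_add_one₀ two_ne_zero,
    zpow_natCast, mul_comm]

theorem mother_wavelet_integral_general (m₀ F Phat : ℝ → ℂ)
    (hunit : ∀ ξ : ℝ, ‖m₀ ξ‖ ^ 2 + ‖m₀ (ξ + Real.pi)‖ ^ 2 = 1)
    (hFmeas : Measurable F) (B : ℝ) (hFbdd : ∀ ξ : ℝ, ‖F ξ‖ ≤ B)
    (href : ∀ ξ : ℝ, F (2 * ξ) = m₀ ξ * F ξ)
    (hcont : ContinuousAt F 0) (hF0 : F 0 = 1)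
    (hdecay : Tendsto
      (fun J : ℤ => ∫ ξ in {ξ : ℝ | (2:ℝ) ^ J ≤ |ξ| ∧ |ξ| ≤ (2:ℝ) ^ (J + 1)}, ‖F ξ‖ ^ 2 / |ξ|)
      atTop (nhds 0))
    (hPhat : ∀ ξ : ℝ,
      Phat (2 * ξ) = Complex.exp (-(ξ : ℂ) * Complex.I) * (starRingEnd ℂ) (m₀ (ξ + Real.pi)) * F ξ) :
    ∫ ξ : ℝ, ‖Phat ξ‖ ^ 2 / |ξ| = 2 * Real.log 2 := by
  set G : ℝ → ℝ := fun ξ => ‖F ξ‖ ^ 2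
  have hwavelet (ξ : ℝ) : ‖Phat ξ‖ ^ 2 = G (ξ / 2) - G ξ := by
    have h := norm_sq_wavelet (hunit (ξ / 2)) (href (ξ / 2)) (hPhat (ξ / 2))
    rwa [mul_div_cancel₀ ξ two_ne_zero] at h
  have hbound (ξ : ℝ) : |G ξ| ≤ B ^ 2 := by
    rw [abs_of_nonneg (sq_nonneg _)]
    exact pow_le_pow_left₀ (norm_nonneg _) (hFbdd ξ) 2
  calc ∫ ξ, ‖Phat ξ‖ ^ 2 / |ξ| = ∫ ξ, (G (ξ / 2) - G ξ) / |ξ| := by simp_rw [hwavelet]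
    _ = 2 * Real.log 2 * G 0 :=
      integral_sub_comp_half_div_abs (hFmeas.norm.pow_const 2) hbound
        (fun ξ => sub_nonneg.1 (hwavelet ξ ▸ sq_nonneg _)) (hcont.norm.pow 2)
        (tendsto_setIntegral_annulus_of_tendsto_Icc hdecay)
    _ = 2 * Real.log 2 := by simp [G, hF0]

/-- For a mother wavelet `Φ` constructed from a filter `m₀` with
`|m₀(ξ)|² + |m₀(ξ+π)|² = 1` and a scaling-function Fourier transform `F` (bounded, measurable,
refinable `F(2ξ) = m₀(ξ)F(ξ)`, continuous at `0` with `F(0) = 1`, with vanishing dyadic tails),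
the mother wavelet `Φ̂(2ξ) = e^{-iξ} conj(m₀(ξ+π)) F(ξ)` satisfies
`∫_ℝ |Φ̂(ξ)|²/|ξ| dξ = 2 ln 2`. -/
theorem mother_wavelet_integral (m₀ F Phat : ℝ → ℂ)
    (hm₀ : Measurable m₀)
    (hunit : ∀ ξ : ℝ, ‖m₀ ξ‖ ^ 2 + ‖m₀ (ξ + Real.pi)‖ ^ 2 = 1)
    (hFmeas : Measurable F) (B : ℝ) (hFbdd : ∀ ξ : ℝ, ‖F ξ‖ ≤ B)
    (href : ∀ ξ : ℝ, F (2 * ξ) = m₀ ξ * F ξ)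
    (hcont : ContinuousAt F 0) (hF0 : F 0 = 1)
    (hdecay : Tendsto
      (fun J : ℤ => ∫ ξ in {ξ : ℝ | (2:ℝ) ^ J ≤ |ξ| ∧ |ξ| ≤ (2:ℝ) ^ (J + 1)}, ‖F ξ‖ ^ 2 / |ξ|)
      atTop (nhds 0))
    (hPhat : ∀ ξ : ℝ,
      Phat (2 * ξ) = Complex.exp (-(ξ : ℂ) * Complex.I) * (starRingEnd ℂ) (m₀ (ξ + Real.pi)) * F ξ) :
    ∫ ξ : ℝ, ‖Phat ξ‖ ^ 2 / |ξ| = 2 * Real.log 2 :=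
  mother_wavelet_integral_general m₀ F Phat hunit hFmeas B hFbdd href hcont hF0 hdecay hPhat
end

section
/- Let q > 1/2 and C₁ > 0. There exists a constant C₀ (depending only on q and C₁) such that: for every integer m ≥ 0, every dyadic interval I ⊂ [0,1] of length 2^{−m}, every family of functions (ψ_{j,l})_{j≥m, 0≤l<2^j} on [0,1] satisfying the vaguelet value decay bound with constants C₁ and q, and every θ ∈ I: Σ_{j≥m} Σ_{l : J_{j,l} ⊄ 3I} ψ_{j,l}(θ)² ≤ C₀. -/
open MeasureTheory
open scoped Classical

/-- The dyadic subinterval `J_{j,l} = [l 2^{-j}, (l+1) 2^{-j}]` of `[0,1]`. -/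
def dyadicI (j l : ℕ) : Set ℝ := Set.Icc ((l : ℝ) / 2 ^ j) (((l : ℝ) + 1) / 2 ^ j)

/-- Distance between two points of `[0,1]` on the circle `ℝ/ℤ`. -/
noncomputable def circleDist (x y : ℝ) : ℝ := ⨅ k : ℤ, |x - y + (k : ℝ)|

/-- Distance from a point to a set on the circle `ℝ/ℤ`. -/
noncomputable def circleDistToSet (θ : ℝ) (J : Set ℝ) : ℝ := ⨅ x : J, circleDist θ (x : ℝ)

/-- `3I`: the union of a dyadic interval `I = J_{m,l}` and its two cyclic neighbors of the
same length. -/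
def tripleI (m l : ℕ) : Set ℝ :=
  dyadicI m ((l + (2 ^ m - 1)) % 2 ^ m) ∪ dyadicI m l ∪ dyadicI m ((l + 1) % 2 ^ m)

/-! If `J_{m+d,l} ⊄ 3I`, its ancestor `J_{m,k}` is at cyclic index distance `g ≥ 2` from
`I = J_{m,l₀}`, so every point of `J_{m+d,l}` is at circle distance at least `(g - 1) 2^{-m}` from
`θ ∈ I`, and the decay bound gives `ψ_{m+d,l}(θ)² ≤ C₁² (2^d (g - 1))^{-2q}`. Each `k` has `2^d`
descendants at level `m + d`, and each value of `g` is taken by at most two `k`, so level `m + d`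
contributes `O(2^{(1-2q)d} ∑ n^{-2q})`: for `q > 1/2` a convergent geometric series in `d`. -/

open Finset

lemma sub_one_div_le_circleDist {N a b c θ x : ℝ} (hN : 0 < N)
    (hc : ∀ k : ℤ, c ≤ |a - b + k * N|)
    (hθ : θ ∈ Set.Icc (a / N) ((a + 1) / N)) (hx : x ∈ Set.Icc (b / N) ((b + 1) / N)) :
    (c - 1) / N ≤ circleDist θ x := by
  obtain ⟨hθ₁, hθ₂⟩ := hθ
  obtain ⟨hx₁, hx₂⟩ := hx
  rw [div_le_iff₀ hN] at hθ₁ hx₁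
  rw [le_div_iff₀ hN] at hθ₂ hx₂
  refine le_ciInf fun k => ?_
  have hcell : |(a - θ * N) - (b - x * N)| ≤ 1 := abs_le.mpr ⟨by linarith, by linarith⟩
  rw [div_le_iff₀ hN]
  calc c - 1 ≤ |a - b + k * N| - |(a - θ * N) - (b - x * N)| := by linarith [hc k]
    _ ≤ |(a - b + k * N) - ((a - θ * N) - (b - x * N))| := abs_sub_abs_le_abs_sub _ _
    _ = |(θ - x + k) * N| := by ring_nf
    _ = |θ - x + k| * N := by rw [abs_mul, abs_of_pos hN]

lemma Nat.mod_eq_ite_of_lt_two_mul {x N : ℕ} (h : x < 2 * N) :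
    x % N = if x < N then x else x - N := by
  split_ifs with hx
  · exact Nat.mod_eq_of_lt hx
  · rw [Nat.mod_eq_sub_mod (not_lt.mp hx), Nat.mod_eq_of_lt (by omega)]

/-- The distance from `a` to `b` in `ℤ/Nℤ`; for `a ≤ N`, `(b + (N - a)) % N` represents `b - a`. -/
def cyclicDist (N a b : ℕ) : ℕ := min ((b + (N - a)) % N) (N - (b + (N - a)) % N)

lemma cyclicDist_le_abs {N a b : ℕ} (ha : a < N) (hb : b < N) (k : ℤ) :
    (cyclicDist N a b : ℤ) ≤ |(a : ℤ) - b + k * N| := by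
  have hkN : k * N ≤ -N ∨ k * N = 0 ∨ N ≤ k * N := by
    rcases lt_trichotomy k 0 with hk | rfl | hk
    · exact Or.inl (by nlinarith)
    · simp
    · exact Or.inr (Or.inr (by nlinarith))
  unfold cyclicDist
  rw [Nat.mod_eq_ite_of_lt_two_mul (by omega)]
  rcases abs_cases ((a : ℤ) - b + k * N) with ⟨h, _⟩ | ⟨h, _⟩ <;> rw [h] <;> split_ifs <;> omega

lemma two_le_cyclicDist {N a b : ℕ} (ha : a < N) (hb : b < N) (h₀ : b ≠ a)
    (hpred : b ≠ (a + (N - 1)) % N) (hsucc : b ≠ (a + 1) % N) : 2 ≤ cyclicDist N a b := by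
  unfold cyclicDist
  rw [Nat.mod_eq_ite_of_lt_two_mul (by omega)] at hpred hsucc ⊢
  split_ifs at hpred hsucc ⊢ <;> omega

lemma dyadicI_nonempty (j l : ℕ) : (dyadicI j l).Nonempty :=
  ⟨l / 2 ^ j, le_rfl, by gcongr; linarith⟩

lemma dyadicI_subset_Icc {j l : ℕ} (hl : l < 2 ^ j) : dyadicI j l ⊆ Set.Icc 0 1 := by
  have hl' : (l : ℝ) + 1 ≤ 2 ^ j := by exact_mod_cast hl
  exact fun x ⟨hx₁, hx₂⟩ =>
    ⟨le_trans (by positivity) hx₁, hx₂.trans ((div_le_one (by positivity)).mpr hl')⟩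

lemma dyadicI_add_subset (m d l : ℕ) : dyadicI (m + d) l ⊆ dyadicI m (l / 2 ^ d) := by
  have hlo : ((l / 2 ^ d : ℕ) : ℝ) * 2 ^ d ≤ l := by exact_mod_cast Nat.div_mul_le_self l (2 ^ d)
  have hhi : (l : ℝ) + 1 ≤ 2 ^ d * ((l / 2 ^ d : ℕ) + 1) := by
    exact_mod_cast Nat.succ_le_of_lt (Nat.lt_mul_div_succ l (by positivity))
  rintro x ⟨hx₁, hx₂⟩
  rw [pow_add] at hx₁ hx₂
  constructor
  · refine le_trans ?_ hx₁
    rw [div_le_div_iff₀ (by positivity) (by positivity)]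
    nlinarith [pow_pos (two_pos : (0 : ℝ) < 2) m]
  · refine hx₂.trans ?_
    rw [div_le_div_iff₀ (by positivity) (by positivity)]
    nlinarith [pow_pos (two_pos : (0 : ℝ) < 2) m]

lemma two_le_cyclicDist_of_not_subset_tripleI {m a b : ℕ} (ha : a < 2 ^ m) (hb : b < 2 ^ m)
    (h : ¬ dyadicI m b ⊆ tripleI m a) : 2 ≤ cyclicDist (2 ^ m) a b := by
  refine two_le_cyclicDist ha hb ?_ ?_ ?_ <;> rintro rfl <;> exact h fun x hx => by
    simp [tripleI, hx]

lemma cyclicDist_sub_one_div_le_circleDistToSet {m d a l : ℕ} (ha : a < 2 ^ m)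
    (hl : l < 2 ^ (m + d)) {θ : ℝ} (hθ : θ ∈ dyadicI m a) :
    ((cyclicDist (2 ^ m) a (l / 2 ^ d) : ℝ) - 1) / 2 ^ m
      ≤ circleDistToSet θ (dyadicI (m + d) l) := by
  have : Nonempty (dyadicI (m + d) l) := (dyadicI_nonempty _ _).to_subtype
  have hk : l / 2 ^ d < 2 ^ m := Nat.div_lt_of_lt_mul (by rwa [mul_comm, ← pow_add])
  refine le_ciInf fun x => sub_one_div_le_circleDist (by positivity) (fun k => ?_) hθ
    (dyadicI_add_subset m d l x.2)
  exact_mod_cast cyclicDist_le_abs ha hk k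

lemma sum_range_add_mod {M : Type*} [AddCommMonoid M] (h : ℕ → M) (N t : ℕ) :
    ∑ k ∈ range N, h ((k + t) % N) = ∑ k ∈ range N, h k := by
  rcases N.eq_zero_or_pos with rfl | hN
  · simp
  have : NeZero N := ⟨hN.ne'⟩
  rw [← Fin.sum_univ_eq_sum_range (fun k => h ((k + t) % N)), ← Fin.sum_univ_eq_sum_range]
  exact Fintype.sum_equiv (Equiv.addRight (Fin.ofNat N t)) _ _ fun k => by
    simp [Fin.val_add]

lemma sum_range_mul_comp_div {M : Type*} [AddCommMonoid M] (F : ℕ → M) (N : ℕ) {b : ℕ}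
    (hb : 0 < b) : ∑ l ∈ range (N * b), F (l / b) = b • ∑ k ∈ range N, F k := by
  induction N with
  | zero => simp
  | succ N ih =>
    have hblock : ∀ i ∈ range b, F ((N * b + i) / b) = F N := fun i hi => by
      rw [mul_comm, Nat.mul_add_div hb, Nat.div_eq_of_lt (mem_range.mp hi), add_zero]
    rw [add_mul, one_mul, sum_range_add, ih, sum_congr rfl hblock, sum_const, card_range,
      sum_range_succ, smul_add]

lemma sum_range_min_sub_one_le {f : ℕ → ℝ} (hf : Summable f) (hf0 : ∀ n, 0 ≤ f n) (N : ℕ) :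
    ∑ r ∈ range N, f (min r (N - r) - 1) ≤ 3 * ∑' n, f n := by
  have hpart : ∀ n, ∑ r ∈ range n, f r ≤ ∑' n, f n := fun n => hf.sum_le_tsum _ fun i _ => hf0 i
  have hleft : ∑ r ∈ range N, f (r - 1) ≤ 2 * ∑' n, f n := by
    rcases N with _ | N
    · simpa using tsum_nonneg hf0
    rw [sum_range_succ']
    simp only [Nat.add_sub_cancel]
    linarith [hpart N, hf.le_tsum 0 fun j _ => hf0 j]
  have hright : ∑ r ∈ range N, f (N - 1 - r) ≤ ∑' n, f n := by
    rw [sum_range_reflect f N]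
    exact hpart N
  have hmin : ∀ r ∈ range N, f (min r (N - r) - 1) ≤ f (r - 1) + f (N - 1 - r) := fun r _ => by
    rcases le_total r (N - r) with h | h
    · rw [min_eq_left h]
      linarith [hf0 (N - 1 - r)]
    · rw [min_eq_right h, show N - r - 1 = N - 1 - r by omega]
      linarith [hf0 (r - 1)]
  calc ∑ r ∈ range N, f (min r (N - r) - 1)
      ≤ ∑ r ∈ range N, (f (r - 1) + f (N - 1 - r)) := sum_le_sum hmin
    _ ≤ 3 * ∑' n, f n := by rw [sum_add_distrib]; linarith

lemma sum_cyclicDist_sub_one_le {f : ℕ → ℝ} (hf : Summable f) (hf0 : ∀ n, 0 ≤ f n) (N a : ℕ) :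
    ∑ k ∈ range N, f (cyclicDist N a k - 1) ≤ 3 * ∑' n, f n :=
  (sum_range_add_mod (fun r => f (min r (N - r) - 1)) N (N - a)).trans_le
    (sum_range_min_sub_one_le hf hf0 N)

lemma sq_le_sq_mul_rpow_of_abs_le {φ C X Y q : ℝ} (hq : 0 ≤ q) (hY : 0 < Y) (hYX : Y ≤ X)
    (h : |φ| ≤ C * X ^ (-q)) : φ ^ 2 ≤ C ^ 2 * Y ^ (-(2 * q)) :=
  calc φ ^ 2 = |φ| ^ 2 := (sq_abs φ).symm
    _ ≤ (C * X ^ (-q)) ^ 2 := pow_le_pow_left₀ (abs_nonneg φ) h 2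
    _ = C ^ 2 * X ^ (-(2 * q)) := by
        rw [mul_pow, ← Real.rpow_mul_natCast (hY.le.trans hYX)]; ring_nf
    _ ≤ C ^ 2 * Y ^ (-(2 * q)) :=
        mul_le_mul_of_nonneg_left (Real.rpow_le_rpow_of_nonpos hY hYX (by linarith)) (sq_nonneg C)

lemma two_pow_rpow_neg_mul_two_pow (q : ℝ) (d : ℕ) :
    ((2 : ℝ) ^ d) ^ (-(2 * q)) * 2 ^ d = ((2 : ℝ) ^ (1 - 2 * q)) ^ d := by
  rw [Real.rpow_pow_comm zero_le_two, sub_eq_neg_add, Real.rpow_add (by positivity),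
    Real.rpow_one]

lemma sq_le_of_not_subset_tripleI {q C₁ : ℝ} (hq : 0 ≤ q) {m d a l : ℕ} (ha : a < 2 ^ m)
    (hl : l < 2 ^ (m + d)) (hnot : ¬ dyadicI (m + d) l ⊆ tripleI m a) {θ φ : ℝ}
    (hθ : θ ∈ dyadicI m a)
    (hφ : |φ| ≤ C₁ * (1 + 2 ^ (m + d) * circleDistToSet θ (dyadicI (m + d) l)) ^ (-q)) :
    φ ^ 2 ≤ C₁ ^ 2 * ((2 : ℝ) ^ d) ^ (-(2 * q))
      * ((cyclicDist (2 ^ m) a (l / 2 ^ d) - 1 : ℕ) : ℝ) ^ (-(2 * q)) := by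
  have hk : l / 2 ^ d < 2 ^ m := Nat.div_lt_of_lt_mul (by rwa [mul_comm, ← pow_add])
  have hgap := two_le_cyclicDist_of_not_subset_tripleI ha hk (fun h => hnot
    ((dyadicI_add_subset m d l).trans h))
  have hgap_pos : (0 : ℝ) < ((cyclicDist (2 ^ m) a (l / 2 ^ d) - 1 : ℕ) : ℝ) := by
    exact_mod_cast (by omega : 0 < cyclicDist (2 ^ m) a (l / 2 ^ d) - 1)
  have hdist := cyclicDist_sub_one_div_le_circleDistToSet (d := d) ha hl hθ
  rw [mul_assoc, ← Real.mul_rpow (by positivity) hgap_pos.le]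
  refine sq_le_sq_mul_rpow_of_abs_le hq (mul_pos (by positivity) hgap_pos) ?_ hφ
  calc (2 : ℝ) ^ d * ((cyclicDist (2 ^ m) a (l / 2 ^ d) - 1 : ℕ) : ℝ)
      = 2 ^ (m + d) * (((cyclicDist (2 ^ m) a (l / 2 ^ d) : ℝ) - 1) / 2 ^ m) := by
        rw [Nat.cast_sub (by omega), pow_add]
        field_simp
        push_cast
        ring
    _ ≤ 2 ^ (m + d) * circleDistToSet θ (dyadicI (m + d) l) := by gcongr
    _ ≤ 1 + 2 ^ (m + d) * circleDistToSet θ (dyadicI (m + d) l) :=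
        le_add_of_nonneg_left zero_le_one

lemma sum_sq_offdiagonal_level_le {q C₁ : ℝ} (hq : 1 / 2 < q) {m d a : ℕ} (ha : a < 2 ^ m)
    {θ : ℝ} (hθ : θ ∈ dyadicI m a) (φ : ℕ → ℝ)
    (hφ : ∀ l < 2 ^ (m + d),
      |φ l| ≤ C₁ * (1 + 2 ^ (m + d) * circleDistToSet θ (dyadicI (m + d) l)) ^ (-q)) :
    ∑ l ∈ (range (2 ^ (m + d))).filter (fun l => ¬ dyadicI (m + d) l ⊆ tripleI m a), φ l ^ 2
      ≤ 3 * C₁ ^ 2 * (∑' n : ℕ, (n : ℝ) ^ (-(2 * q))) * ((2 : ℝ) ^ (1 - 2 * q)) ^ d := by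
  set f : ℕ → ℝ := fun n => (n : ℝ) ^ (-(2 * q))
  have hf : Summable f := Real.summable_nat_rpow.mpr (by linarith)
  have hf0 : ∀ n, 0 ≤ f n := fun n => by positivity
  set c := C₁ ^ 2 * ((2 : ℝ) ^ d) ^ (-(2 * q))
  have hc : 0 ≤ c := by positivity
  calc ∑ l ∈ (range (2 ^ (m + d))).filter (fun l => ¬ dyadicI (m + d) l ⊆ tripleI m a), φ l ^ 2
      ≤ ∑ l ∈ (range (2 ^ (m + d))).filter (fun l => ¬ dyadicI (m + d) l ⊆ tripleI m a),
          c * f (cyclicDist (2 ^ m) a (l / 2 ^ d) - 1) := by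
        refine sum_le_sum fun l hl => ?_
        rw [mem_filter, mem_range] at hl
        exact sq_le_of_not_subset_tripleI (by linarith) ha hl.1 hl.2 hθ (hφ l hl.1)
    _ ≤ ∑ l ∈ range (2 ^ m * 2 ^ d), c * f (cyclicDist (2 ^ m) a (l / 2 ^ d) - 1) := by
        rw [← pow_add]
        exact sum_le_sum_of_subset_of_nonneg (filter_subset _ _) fun l _ _ =>
          mul_nonneg hc (hf0 _)
    _ = c * 2 ^ d * ∑ k ∈ range (2 ^ m), f (cyclicDist (2 ^ m) a k - 1) := by
        rw [sum_range_mul_comp_div (fun k => c * f (cyclicDist (2 ^ m) a k - 1)) _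
          (by positivity), ← mul_sum, nsmul_eq_mul]
        push_cast
        ring
    _ ≤ c * 2 ^ d * (3 * ∑' n, f n) := by
        gcongr
        exact sum_cyclicDist_sub_one_le hf hf0 _ _
    _ = 3 * C₁ ^ 2 * (∑' n, f n) * ((2 : ℝ) ^ (1 - 2 * q)) ^ d := by
        rw [← two_pow_rpow_neg_mul_two_pow]
        ring

theorem offdiagonal_square_sum_bound_general (q C₁ : ℝ) (hq : 1 / 2 < q) :
    ∃ C₀ : ℝ, 0 < C₀ ∧
      ∀ (m l₀ : ℕ), l₀ < 2 ^ m →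
      ∀ ψ : ℕ → ℕ → ℝ → ℝ,
        (∀ j, m ≤ j → ∀ l < 2 ^ j, ∀ θ ∈ Set.Icc (0:ℝ) 1,
          |ψ j l θ| ≤ C₁ * (1 + 2 ^ j * circleDistToSet θ (dyadicI j l)) ^ (-q)) →
        ∀ θ ∈ dyadicI m l₀, ∀ M : ℕ,
          (∑ d ∈ Finset.range M,
            ∑ l ∈ (Finset.range (2 ^ (m + d))).filter
                (fun l => ¬ dyadicI (m + d) l ⊆ tripleI m l₀),
              (ψ (m + d) l θ) ^ 2) ≤ C₀ := by
  set K := 3 * C₁ ^ 2 * ∑' n : ℕ, (n : ℝ) ^ (-(2 * q))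
  set ρ := (2 : ℝ) ^ (1 - 2 * q)
  have hK : 0 ≤ K := mul_nonneg (by positivity) (tsum_nonneg fun n => by positivity)
  have hρ : 0 ≤ ρ := by positivity
  have hρ1 : ρ < 1 := Real.rpow_lt_one_of_one_lt_of_neg one_lt_two (by linarith)
  have hC₀ : 0 < K / (1 - ρ) + 1 :=
    add_pos_of_nonneg_of_pos (div_nonneg hK (by linarith)) one_pos
  refine ⟨K / (1 - ρ) + 1, hC₀, fun m l₀ hl₀ ψ hψ θ hθ M => ?_⟩
  calc _ ≤ ∑ d ∈ range M, K * ρ ^ d := sum_le_sum fun d _ =>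
        sum_sq_offdiagonal_level_le hq hl₀ hθ _ fun l hl =>
          hψ (m + d) (Nat.le_add_right m d) l hl θ (dyadicI_subset_Icc hl₀ hθ)
    _ = K * ∑ d ∈ range M, ρ ^ d := (mul_sum _ _ _).symm
    _ ≤ K * (ρ ^ 0 / (1 - ρ)) := by
        rw [range_eq_Ico]
        exact mul_le_mul_of_nonneg_left (geom_sum_Ico_le_of_lt_one hρ hρ1) hK
    _ ≤ K / (1 - ρ) + 1 := by rw [pow_zero, mul_one_div]; linarith

/-- Off-diagonal square-sum bound for vaguelets: if the `ψ_{j,l}` (for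
`j ≥ m`) satisfy the value decay bound with constants `C₁, q` (`q > 1/2`), then for every
dyadic interval `I` of length `2^{-m}` and every `θ ∈ I`, all partial sums of
`Σ_{j ≥ m} Σ_{l : J_{j,l} ⊄ 3I} ψ_{j,l}(θ)²` are bounded by a constant `C₀ = C₀(q, C₁)`. -/
theorem offdiagonal_square_sum_bound (q C₁ : ℝ) (hq : 1 / 2 < q) (hC₁ : 0 < C₁) :
    ∃ C₀ : ℝ, 0 < C₀ ∧
      ∀ (m l₀ : ℕ), l₀ < 2 ^ m →
      ∀ ψ : ℕ → ℕ → ℝ → ℝ,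
        (∀ j, m ≤ j → ∀ l < 2 ^ j, ∀ θ ∈ Set.Icc (0:ℝ) 1,
          |ψ j l θ| ≤ C₁ * (1 + 2 ^ j * circleDistToSet θ (dyadicI j l)) ^ (-q)) →
        ∀ θ ∈ dyadicI m l₀, ∀ M : ℕ,
          (∑ d ∈ Finset.range M,
            ∑ l ∈ (Finset.range (2 ^ (m + d))).filter
                (fun l => ¬ dyadicI (m + d) l ⊆ tripleI m l₀),
              (ψ (m + d) l θ) ^ 2) ≤ C₀ :=
  offdiagonal_square_sum_bound_general q C₁ hq
end

section
/- Let q ≥ 2 and C₁ > 0. There exists a constant C (depending only on q and C₁) such that the following holds. Let δ_i = 2^{−a} and δ_k = 2^{−b} with integers 0 ≤ a ≤ b (so δ_k ≤ δ_i ≤ 1), let I ⊂ [0,1] be an interval of length δ_i, let B ⊂ [0,1] be an interval of length 2δ_k whose distance from I on the circle ℝ/ℤ is at least δ_i/4, and let 𝒞 be the collection of all dyadic subintervals of [0,1] of length at most δ_k that are contained in B. Suppose the functions (ψ_J)_{J∈𝒞} are differentiable and satisfy the vaguelet value and derivative decay bounds with constants C₁ and q. Then for all θ, θ′ ∈ I: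 Σ_{J∈𝒞} ( ψ_J(θ) − ψ_J(θ′) )² ≤ C·|θ − θ′|·δ_k^{2q−2}/δ_i^{2q−1}. -/
open MeasureTheory
open scoped Classical

/-!
On `I` every vaguelet of `𝒞` of generation `j` is evaluated at circle distance at least `δ_i/4`
from its interval, so its value is at most `C₁ (2^j δ_i/4)^{-q}` and its derivative at most
`C₁ 2^j (2^j δ_i/4)^{-(q-1)}`. Bounding the squared increment by (size bound) × (mean value bound)
gives a term linear in `|θ - θ'|`. Generation `b + d` has at most `2^{d+1} + 1` intervals inside
`B`, and for `q ≥ 2` the resulting generation sums decay like `2^{-d}`; the geometric series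
finishes the proof.
-/

open Finset

lemma dyadicI_left_le_right (j l : ℕ) : (l : ℝ) / 2 ^ j ≤ ((l : ℝ) + 1) / 2 ^ j := by
  gcongr; linarith

lemma dyadicI_subset_Icc_iff {j l : ℕ} {x y : ℝ} :
    dyadicI j l ⊆ Set.Icc x y ↔ x * 2 ^ j ≤ l ∧ (l : ℝ) + 1 ≤ y * 2 ^ j := by
  have hpos : (0 : ℝ) < 2 ^ j := by positivity
  rw [dyadicI, Set.Icc_subset_Icc_iff (dyadicI_left_le_right j l), le_div_iff₀ hpos,
    div_le_iff₀ hpos]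

lemma le_circleDistToSet_of_subset {x r : ℝ} {J B : Set ℝ} (hJ : J.Nonempty) (hJB : J ⊆ B)
    (hB : ∀ u ∈ B, r ≤ circleDist x u) : r ≤ circleDistToSet x J :=
  have := hJ.to_subtype
  le_ciInf fun u => hB u (hJB u.2)

lemma card_filter_dyadicI_subset_Icc_le (j : ℕ) (x : ℝ) {L : ℝ} (hL : 0 ≤ L) :
    (#{l ∈ range (2 ^ j) | dyadicI j l ⊆ Set.Icc x (x + L)} : ℝ) ≤ L * 2 ^ j + 1 := by
  set n₀ := ⌈x * 2 ^ j⌉₊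
  have hsub : {l ∈ range (2 ^ j) | dyadicI j l ⊆ Set.Icc x (x + L)} ⊆
      Icc n₀ (n₀ + ⌊L * 2 ^ j⌋₊) := by
    intro l hl
    obtain ⟨hleft, hright⟩ := dyadicI_subset_Icc_iff.1 (mem_filter.1 hl).2
    have hn₀l : n₀ ≤ l := Nat.ceil_le.2 hleft
    have hdiff : ((l - n₀ : ℕ) : ℝ) ≤ L * 2 ^ j := by
      rw [Nat.cast_sub hn₀l]
      linarith [Nat.le_ceil (x * 2 ^ j)]
    exact mem_Icc.2 ⟨hn₀l, by have := Nat.le_floor hdiff; omega⟩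
  calc (#{l ∈ range (2 ^ j) | dyadicI j l ⊆ Set.Icc x (x + L)} : ℝ)
      ≤ ((⌊L * 2 ^ j⌋₊ + 1 : ℕ) : ℝ) := by
        exact_mod_cast (card_le_card hsub).trans (by simp; omega)
    _ ≤ L * 2 ^ j + 1 := by push_cast; linarith [Nat.floor_le (by positivity : 0 ≤ L * 2 ^ j)]

lemma sq_sub_le_of_abs_le_of_abs_deriv_le {f : ℝ → ℝ} {S : Set ℝ} (hS : Convex ℝ S)
    (hf : ∀ x ∈ S, DifferentiableAt ℝ f x) {A A' : ℝ} (hA : ∀ x ∈ S, |f x| ≤ A)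
    (hA' : ∀ x ∈ S, |deriv f x| ≤ A') {x y : ℝ} (hx : x ∈ S) (hy : y ∈ S) :
    (f x - f y) ^ 2 ≤ 2 * A * A' * |x - y| := by
  have hlip : |f x - f y| ≤ A' * |x - y| := by
    simpa only [Real.norm_eq_abs] using hS.norm_image_sub_le_of_norm_deriv_le hf hA' hy hx
  have hsize : |f x - f y| ≤ 2 * A := by
    linarith [abs_sub (f x) (f y), hA x hx, hA y hy]
  calc (f x - f y) ^ 2 = |f x - f y| * |f x - f y| := by rw [← sq_abs, sq]
    _ ≤ 2 * A * (A' * |x - y|) :=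
        mul_le_mul hsize hlip (abs_nonneg _) (by linarith [abs_nonneg (f x), hA x hx])
    _ = 2 * A * A' * |x - y| := by ring

def VagueletBounds (C₁ q : ℝ) (j : ℕ) (J : Set ℝ) (f : ℝ → ℝ) : Prop :=
  ∀ θ ∈ Set.Icc (0 : ℝ) 1,
    |f θ| ≤ C₁ * (1 + 2 ^ j * circleDistToSet θ J) ^ (-q) ∧
    |deriv f θ| ≤ C₁ * 2 ^ j * (1 + 2 ^ j * circleDistToSet θ J) ^ (-(q - 1))

namespace VagueletBounds

variable {C₁ q r : ℝ} {j : ℕ} {J : Set ℝ} {f : ℝ → ℝ}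

lemma abs_le_of_le_circleDistToSet (hf : VagueletBounds C₁ q j J f) (hC₁ : 0 ≤ C₁) (hq : 1 ≤ q)
    (hr : 0 < r) {θ : ℝ} (hθ : θ ∈ Set.Icc (0 : ℝ) 1) (hfar : r ≤ circleDistToSet θ J) :
    |f θ| ≤ C₁ * (2 ^ j * r) ^ (-q) ∧ |deriv f θ| ≤ C₁ * 2 ^ j * (2 ^ j * r) ^ (-(q - 1)) := by
  have hscaled : 2 ^ j * r ≤ 1 + 2 ^ j * circleDistToSet θ J := by
    nlinarith [mul_le_mul_of_nonneg_left hfar (by positivity : (0 : ℝ) ≤ 2 ^ j)]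
  have hdecay (s : ℝ) (hs : 0 ≤ s) :
      (1 + 2 ^ j * circleDistToSet θ J) ^ (-s) ≤ (2 ^ j * r) ^ (-s) :=
    Real.rpow_le_rpow_of_nonpos (by positivity) hscaled (neg_nonpos.2 hs)
  obtain ⟨hval, hder⟩ := hf θ hθ
  exact ⟨hval.trans (mul_le_mul_of_nonneg_left (hdecay q (by linarith)) hC₁),
    hder.trans (mul_le_mul_of_nonneg_left (hdecay (q - 1) (by linarith)) (by positivity))⟩

lemma sq_sub_le (hf : VagueletBounds C₁ q j J f) (hdiff : Differentiable ℝ f) (hC₁ : 0 ≤ C₁)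
    (hq : 1 ≤ q) (hr : 0 < r) {S : Set ℝ} (hS : Convex ℝ S) (hS01 : S ⊆ Set.Icc 0 1)
    (hfar : ∀ θ ∈ S, r ≤ circleDistToSet θ J) {θ θ' : ℝ} (hθ : θ ∈ S) (hθ' : θ' ∈ S) :
    (f θ - f θ') ^ 2 ≤ 2 * 2 ^ j * (2 ^ j * r) ^ (-(2 * q - 1)) * (C₁ ^ 2 * |θ - θ'|) := by
  have hbounds θ (hθ : θ ∈ S) := hf.abs_le_of_le_circleDistToSet hC₁ hq hr (hS01 hθ) (hfar θ hθ)
  refine (sq_sub_le_of_abs_le_of_abs_deriv_le hS (fun x _ => hdiff x)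
    (fun x hx => (hbounds x hx).1) (fun x hx => (hbounds x hx).2) hθ hθ').trans_eq ?_
  rw [show -(2 * q - 1) = -q + -(q - 1) by ring, Real.rpow_add (by positivity)]
  ring

end VagueletBounds

lemma sum_sq_sub_le_of_far {C₁ q r x L : ℝ} (hC₁ : 0 ≤ C₁) (hq : 1 ≤ q) (hr : 0 < r)
    (hL : 0 ≤ L) (j : ℕ) {S : Set ℝ} (hS : Convex ℝ S) (hS01 : S ⊆ Set.Icc 0 1)
    (hfar : ∀ s ∈ S, ∀ u ∈ Set.Icc x (x + L), r ≤ circleDist s u) (ψ : ℕ → ℝ → ℝ)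
    (hψ : ∀ l < 2 ^ j, dyadicI j l ⊆ Set.Icc x (x + L) →
      Differentiable ℝ (ψ l) ∧ VagueletBounds C₁ q j (dyadicI j l) (ψ l))
    {θ θ' : ℝ} (hθ : θ ∈ S) (hθ' : θ' ∈ S) :
    ∑ l ∈ range (2 ^ j) with dyadicI j l ⊆ Set.Icc x (x + L), (ψ l θ - ψ l θ') ^ 2 ≤
      (L * 2 ^ j + 1) * (2 * 2 ^ j * (2 ^ j * r) ^ (-(2 * q - 1)) * (C₁ ^ 2 * |θ - θ'|)) := by
  refine (sum_le_card_nsmul _ _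
    (2 * 2 ^ j * (2 ^ j * r) ^ (-(2 * q - 1)) * (C₁ ^ 2 * |θ - θ'|)) fun l hl => ?_).trans ?_
  · obtain ⟨hlj, hsub⟩ := mem_filter.1 hl
    obtain ⟨hdiff, hbounds⟩ := hψ l (mem_range.1 hlj) hsub
    exact hbounds.sq_sub_le hdiff hC₁ hq hr hS hS01
      (fun s hs => le_circleDistToSet_of_subset (dyadicI_nonempty j l) hsub (hfar s hs)) hθ hθ'
  · rw [nsmul_eq_mul]
    gcongr
    exact card_filter_dyadicI_subset_Icc_le j x hL

lemma two_mul_add_one_mul_rpow_le {δ ρ t q : ℝ} (hδ : 0 < δ) (hρ : 0 < ρ) (hq : 2 ≤ q)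
    (hδt : 1 ≤ δ * t) :
    (2 * δ * t + 1) * (2 * t * (t * (ρ / 4)) ^ (-(2 * q - 1))) ≤
      6 * 4 ^ (2 * q - 1) * (δ ^ (2 * q - 2) / ρ ^ (2 * q - 1)) * (δ * t)⁻¹ := by
  set κ := 2 * q - 1
  set u := δ * t
  have hu : 0 < u := by linarith
  have ht : t = u / δ := by rw [eq_div_iff hδ.ne', mul_comm]
  have hfactor_nonneg : 0 ≤ 2 * t * (t * (ρ / 4)) ^ (-κ) := by rw [ht]; positivity
  have hexact : 3 * u * (2 * t * (t * (ρ / 4)) ^ (-κ)) =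
      6 * 4 ^ κ * (δ ^ (2 * q - 2) / ρ ^ κ) * u ^ (2 - κ) := by
    rw [show 2 * q - 2 = κ - 1 by ring, Real.rpow_sub_one hδ.ne', Real.rpow_sub hu,
      Real.rpow_two, Real.rpow_neg (by rw [ht]; positivity), ht,
      Real.mul_rpow (by positivity) (by positivity), Real.div_rpow hu.le hδ.le,
      Real.div_rpow hρ.le (by norm_num)]
    field_simp
    ring
  have hdecay : u ^ (2 - κ) ≤ u⁻¹ := by
    rw [← Real.rpow_neg_one]
    exact Real.rpow_le_rpow_of_exponent_le hδt (by linarith)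
  calc (2 * δ * t + 1) * (2 * t * (t * (ρ / 4)) ^ (-κ))
      ≤ 3 * u * (2 * t * (t * (ρ / 4)) ^ (-κ)) := by gcongr; linarith
    _ = 6 * 4 ^ κ * (δ ^ (2 * q - 2) / ρ ^ κ) * u ^ (2 - κ) := hexact
    _ ≤ 6 * 4 ^ κ * (δ ^ (2 * q - 2) / ρ ^ κ) * u⁻¹ := by gcongr

/-- Second-moment bound for increments of the Gaussian field built from the
vaguelets of the dyadic intervals of length at most `δ_k` contained in an interval `B` of
length `2δ_k`, which is at circle distance at least `δ_i/4` from an interval `I` of length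
`δ_i ≥ δ_k`: for `θ, θ' ∈ I`, all partial sums of `Σ_{J ∈ 𝒞} (ψ_J(θ) - ψ_J(θ'))²` are at most
`C |θ - θ'| δ_k^{2q-2}/δ_i^{2q-1}`, with `C = C(q, C₁)`. -/
theorem far_field_increment_bound (q C₁ : ℝ) (hq : 2 ≤ q) (hC₁ : 0 < C₁) :
    ∃ C : ℝ, 0 < C ∧
      ∀ a b : ℕ, a ≤ b →
      ∀ x₁ x₂ : ℝ,
        Set.Icc x₁ (x₁ + (2:ℝ) ^ (-(a:ℤ))) ⊆ Set.Icc (0:ℝ) 1 →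
        Set.Icc x₂ (x₂ + 2 * (2:ℝ) ^ (-(b:ℤ))) ⊆ Set.Icc (0:ℝ) 1 →
        (∀ s ∈ Set.Icc x₁ (x₁ + (2:ℝ) ^ (-(a:ℤ))),
          ∀ u ∈ Set.Icc x₂ (x₂ + 2 * (2:ℝ) ^ (-(b:ℤ))),
            (2:ℝ) ^ (-(a:ℤ)) / 4 ≤ circleDist s u) →
      ∀ ψ : ℕ → ℕ → ℝ → ℝ,
        (∀ j, b ≤ j → ∀ l < 2 ^ j,
          dyadicI j l ⊆ Set.Icc x₂ (x₂ + 2 * (2:ℝ) ^ (-(b:ℤ))) →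
          Differentiable ℝ (ψ j l) ∧
          (∀ θ ∈ Set.Icc (0:ℝ) 1,
            |ψ j l θ| ≤ C₁ * (1 + 2 ^ j * circleDistToSet θ (dyadicI j l)) ^ (-q) ∧
            |deriv (ψ j l) θ| ≤
              C₁ * 2 ^ j * (1 + 2 ^ j * circleDistToSet θ (dyadicI j l)) ^ (-(q - 1)))) →
      ∀ θ ∈ Set.Icc x₁ (x₁ + (2:ℝ) ^ (-(a:ℤ))),
      ∀ θ' ∈ Set.Icc x₁ (x₁ + (2:ℝ) ^ (-(a:ℤ))),
      ∀ M : ℕ,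
        (∑ d ∈ Finset.range M,
          ∑ l ∈ (Finset.range (2 ^ (b + d))).filter
              (fun l => dyadicI (b + d) l ⊆ Set.Icc x₂ (x₂ + 2 * (2:ℝ) ^ (-(b:ℤ)))),
            (ψ (b + d) l θ - ψ (b + d) l θ') ^ 2) ≤
          C * |θ - θ'| * ((2:ℝ) ^ (-(b:ℤ))) ^ (2 * q - 2) / ((2:ℝ) ^ (-(a:ℤ))) ^ (2 * q - 1) := by
  refine ⟨12 * 4 ^ (2 * q - 1) * C₁ ^ 2, by positivity, ?_⟩
  intro a b _ x₁ x₂ hI _ hfar ψ hψ θ hθ θ' hθ' M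
  set δi : ℝ := 2 ^ (-(a : ℤ))
  set δk : ℝ := 2 ^ (-(b : ℤ))
  set K := 6 * 4 ^ (2 * q - 1) * (δk ^ (2 * q - 2) / δi ^ (2 * q - 1)) * (C₁ ^ 2 * |θ - θ'|)
  have hscale (d : ℕ) :
      ∑ l ∈ range (2 ^ (b + d)) with dyadicI (b + d) l ⊆ Set.Icc x₂ (x₂ + 2 * δk),
        (ψ (b + d) l θ - ψ (b + d) l θ') ^ 2 ≤ K * (1 / 2) ^ d := by
    have hδt : δk * 2 ^ (b + d) = 2 ^ d := by
      simp only [δk, zpow_neg, zpow_natCast, pow_add]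
      field_simp
    calc _ ≤ (2 * δk * 2 ^ (b + d) + 1) * (2 * 2 ^ (b + d) * (2 ^ (b + d) * (δi / 4)) ^
            (-(2 * q - 1))) * (C₁ ^ 2 * |θ - θ'|) := by
          rw [mul_assoc]
          exact sum_sq_sub_le_of_far hC₁.le (by linarith) (by positivity) (by positivity) (b + d)
            (convex_Icc _ _) hI hfar (ψ (b + d)) (hψ (b + d) (Nat.le_add_right b d)) hθ hθ'
      _ ≤ 6 * 4 ^ (2 * q - 1) * (δk ^ (2 * q - 2) / δi ^ (2 * q - 1)) *
            (δk * 2 ^ (b + d))⁻¹ * (C₁ ^ 2 * |θ - θ'|) := by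
          refine mul_le_mul_of_nonneg_right (two_mul_add_one_mul_rpow_le (by positivity)
            (by positivity) hq ?_) (by positivity)
          rw [hδt]
          exact one_le_pow₀ one_le_two
      _ = K * (1 / 2) ^ d := by rw [hδt, one_div_pow]; simp only [K]; ring
  calc _ ≤ ∑ d ∈ range M, K * (1 / 2) ^ d := sum_le_sum fun d _ => hscale d
    _ = K * ∑ d ∈ range M, (1 / 2 : ℝ) ^ d := (mul_sum _ _ _).symm
    _ ≤ K * 2 := by gcongr; exact sum_geometric_two_le M
    _ = _ := by ring
end

section
/- Let q > 2 and C₁ > 0. There is a constant C (depending only on q and C₁) such that the following holds. Let 0 ≤ l₁ < l₀ be integers, and let (a_{l,m}), indexed by integers l ≥ l₀ and 1 ≤ m ≤ 2^{l−l₀}, be a jointly independent family of centered real Gaussian random variables, each of variance at most 2. Let b_{l,m} be constants with 0 ≤ b_{l,m} ≤ C₁·2^{−q(l−l₁)}. Then for every λ > 0: P( Σ_{l≥l₀} Σ_{m=1}^{2^{l−l₀}} b_{l,m} |a_{l,m}| ≥ λ·2^{−q(l₀−l₁)/2} ) ≤ C·e^{−λ²/C}. -/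
/-!
If the weighted sum reaches `λ t` with `t = 2^(-q(l₀-l₁)/2)`, then some coefficient at depth
`k = l - l₀` has `b |a| ≥ θ_k := λ t 4^(-k) / 4`, because the `2^k` thresholds at depth `k` add up
to only `λ t / 2`. Since `b ≤ C₁ 2^(-q(l-l₁))`, this forces `|a| ≥ λ 2^((q-2)k) / (4 C₁)`, an event
of Gaussian probability at most `2 exp(-γ λ² 4^((q-2)k))` with `γ = (8 C₁)⁻²`. As `q > 2`, for large
`λ` this is at most `2 exp(-γ λ²) 4^(-k)`, and the union bound over the `2^k` indices of each depth
gives `4 exp(-γ λ²)`; for small `λ` the probability is trivially at most `1`.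
-/

open MeasureTheory ProbabilityTheory
open scoped ENNReal NNReal

abbrev DyadicIndex (l₀ : ℕ) := {p : ℕ × ℕ // l₀ ≤ p.1 ∧ 1 ≤ p.2 ∧ p.2 ≤ 2 ^ (p.1 - l₀)}

def dyadicIndexEquiv (l₀ : ℕ) : DyadicIndex l₀ ≃ Σ k : ℕ, Fin (2 ^ k) where
  toFun p := ⟨p.1.1 - l₀, ⟨p.1.2 - 1, by have := p.2; omega⟩⟩
  invFun i := ⟨(l₀ + i.1, i.2 + 1), by simp⟩
  left_inv := by
    rintro ⟨⟨l, m⟩, hl, hm, -⟩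
    simp only [Subtype.mk.injEq, Prod.mk.injEq]
    omega
  right_inv := by
    rintro ⟨k, i⟩
    simp only [add_tsub_cancel_left, add_tsub_cancel_right, Sigma.mk.injEq, true_and]
    exact (Fin.heq_ext_iff (by simp)).2 rfl

theorem tsum_dyadicIndex (l₀ : ℕ) (f : ℕ → ℝ≥0∞) :
    ∑' p : DyadicIndex l₀, f (p.1.1 - l₀) = ∑' k : ℕ, 2 ^ k * f k := by
  rw [← (dyadicIndexEquiv l₀).symm.tsum_eq, ENNReal.tsum_sigma']
  simp [dyadicIndexEquiv]

theorem ENNReal.tsum_two_pow_mul_ofReal_mul_four_inv_pow {c : ℝ} (hc : 0 ≤ c) :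
    ∑' k : ℕ, 2 ^ k * ENNReal.ofReal (c * 4⁻¹ ^ k) = ENNReal.ofReal (2 * c) := by
  have hterm (k : ℕ) : 2 ^ k * ENNReal.ofReal (c * 4⁻¹ ^ k) = ENNReal.ofReal (c * 2⁻¹ ^ k) := by
    rw [← ENNReal.ofReal_ofNat, ← ENNReal.ofReal_pow zero_le_two,
      ← ENNReal.ofReal_mul (by positivity)]
    congr 1
    rw [mul_left_comm, ← mul_pow]
    norm_num
  simp_rw [hterm]
  have hsum : Summable fun k : ℕ => c * (2:ℝ)⁻¹ ^ k :=
    (summable_geometric_of_lt_one (by norm_num) (by norm_num)).mul_left c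
  rw [← ENNReal.ofReal_tsum_of_nonneg (fun k => by positivity) hsum, tsum_mul_left,
    tsum_geometric_inv_two, mul_comm]

theorem measure_le_tsum_le_tsum_measure_le {Ω ι : Type*} [MeasurableSpace Ω] [Countable ι]
    (μ : Measure Ω) {X : ι → Ω → ℝ≥0∞} {θ : ι → ℝ≥0∞} {s : ℝ≥0∞} (hθ : ∑' i, θ i < s) :
    μ {ω | s ≤ ∑' i, X i ω} ≤ ∑' i, μ {ω | θ i ≤ X i ω} := by
  refine (measure_mono fun ω hω => ?_).trans (measure_iUnion_le _)
  by_contra hnot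
  simp only [Set.mem_iUnion, Set.mem_ofPred_eq, not_exists, not_le] at hnot
  exact (hθ.trans_le hω).not_ge (ENNReal.tsum_le_tsum fun i => (hnot i).le)

theorem hasSubgaussianMGF_of_map_eq_gaussianReal {Ω : Type*} [MeasurableSpace Ω] {μ : Measure Ω}
    {X : Ω → ℝ} {v c : ℝ≥0} (hvc : v ≤ c) (hX : μ.map X = gaussianReal 0 v) :
    HasSubgaussianMGF X c μ := by
  refine (HasSubgaussianMGF.id_map_iff
    (aemeasurable_of_map_neZero (by rw [hX]; infer_instance))).1 ?_
  rw [hX]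
  refine ⟨integrable_exp_mul_gaussianReal, fun t => ?_⟩
  simp only [mgf_id_gaussianReal, zero_mul, zero_add]
  gcongr

namespace ProbabilityTheory.HasSubgaussianMGF

variable {Ω : Type*} [MeasurableSpace Ω] {μ : Measure Ω} [IsFiniteMeasure μ] {X : Ω → ℝ} {c : ℝ≥0}

theorem measure_abs_ge_le (h : HasSubgaussianMGF X c μ) {ε : ℝ} (hε : 0 ≤ ε) :
    μ {ω | ε ≤ |X ω|} ≤ ENNReal.ofReal (2 * Real.exp (-ε ^ 2 / (2 * c))) := by
  have hsplit : {ω | ε ≤ |X ω|} = {ω | ε ≤ X ω} ∪ {ω | ε ≤ (-X) ω} := by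
    ext ω; simp [le_abs]
  rw [← ofReal_measureReal, hsplit]
  gcongr
  calc _ ≤ μ.real {ω | ε ≤ X ω} + μ.real {ω | ε ≤ (-X) ω} := measureReal_union_le _ _
    _ ≤ _ := by linarith [h.measure_ge_le hε, h.neg.measure_ge_le hε]

theorem measure_le_mul_abs_le (h : HasSubgaussianMGF X c μ) {b B x θ : ℝ} (hb : 0 ≤ b)
    (hbB : b ≤ B) (hB : 0 < B) (hx : 0 ≤ x) (hθ : B * x ≤ θ) :
    μ {ω | ENNReal.ofReal θ ≤ ENNReal.ofReal (b * |X ω|)} ≤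
      ENNReal.ofReal (2 * Real.exp (-x ^ 2 / (2 * c))) := by
  refine (measure_mono fun ω hω => ?_).trans (h.measure_abs_ge_le hx)
  rw [Set.mem_ofPred_eq, ENNReal.ofReal_le_ofReal_iff (by positivity)] at hω
  refine le_of_mul_le_mul_left ?_ hB
  calc B * x ≤ b * |X ω| := hθ.trans hω
    _ ≤ B * |X ω| := by gcongr

end ProbabilityTheory.HasSubgaussianMGF

theorem two_rpow_neg_mul_add_mul_pow_le {q δ : ℝ} (hqδ : 0 ≤ q * δ) (k : ℕ) :
    (2:ℝ) ^ (-(q * (δ + k))) * ((2:ℝ) ^ (q - 2)) ^ k ≤ 2 ^ (-(q * δ) / 2) * 4⁻¹ ^ k := by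
  have hfour : (4:ℝ)⁻¹ ^ k = 2 ^ (-2 * (k:ℝ)) := by
    rw [Real.rpow_mul zero_le_two, Real.rpow_natCast]; norm_num
  rw [hfour, ← Real.rpow_mul_natCast zero_le_two, ← Real.rpow_add two_pos,
    ← Real.rpow_add two_pos]
  exact Real.rpow_le_rpow_of_exponent_le one_le_two (by nlinarith)

theorem Real.exp_neg_mul_pow_le_mul_four_inv_pow {r s : ℝ} (hr : 1 < r) (hs : 2 / (r - 1) ≤ s)
    (k : ℕ) : Real.exp (-(s * r ^ k)) ≤ Real.exp (-s) * 4⁻¹ ^ k := by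
  have hbern : s + 2 * k ≤ s * r ^ k := by
    have h2 : 2 ≤ s * (r - 1) := by rwa [div_le_iff₀ (by linarith)] at hs
    have hs0 : 0 ≤ s := le_trans (by have := sub_pos.2 hr; positivity) hs
    have hpow : 1 + k * (r - 1) ≤ r ^ k := by
      simpa using one_add_mul_le_pow (by linarith : (-2:ℝ) ≤ r - 1) k
    nlinarith [mul_le_mul_of_nonneg_left hpow hs0, (k.cast_nonneg : (0:ℝ) ≤ k)]
  have hexp2 : Real.exp (-2) ≤ 4⁻¹ := by
    rw [Real.exp_neg, inv_le_inv₀ (Real.exp_pos 2) four_pos]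
    linarith [Real.quadratic_le_exp_of_nonneg zero_le_two]
  calc Real.exp (-(s * r ^ k)) ≤ Real.exp (-s + k * -2) := Real.exp_le_exp.2 (by linarith)
    _ = Real.exp (-s) * Real.exp (-2) ^ k := by rw [Real.exp_add, Real.exp_nat_mul]
    _ ≤ Real.exp (-s) * 4⁻¹ ^ k := by gcongr

theorem exists_pos_forall_le_ofReal_mul_exp_neg_sq_div {A γ Λ : ℝ} (hA : 0 ≤ A) (hγ : 0 < γ)
    (hΛ : 0 ≤ Λ) : ∃ C : ℝ, 0 < C ∧ ∀ (x : ℝ) (p : ℝ≥0∞), p ≤ 1 →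
      (Λ ≤ x ^ 2 → p ≤ ENNReal.ofReal (A * Real.exp (-(γ * x ^ 2)))) →
      p ≤ ENNReal.ofReal (C * Real.exp (-x ^ 2 / C)) := by
  refine ⟨3 + A + Λ + γ⁻¹, by positivity, fun x p hp1 hlarge => ?_⟩
  set C := 3 + A + Λ + γ⁻¹
  have hγinv := inv_pos.2 hγ
  have hC3 : 3 ≤ C := by linarith
  have hCpos : 0 < C := by linarith
  rcases le_or_gt Λ (x ^ 2) with hx | hx
  · refine (hlarge hx).trans (ENNReal.ofReal_le_ofReal ?_)
    have hγC : C⁻¹ ≤ γ := by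
      rw [inv_le_comm₀ hCpos hγ]; linarith
    gcongr
    · linarith
    · rw [neg_div, neg_le_neg_iff, div_eq_mul_inv, mul_comm]
      exact mul_le_mul_of_nonneg_right hγC (sq_nonneg x)
  · refine hp1.trans (ENNReal.one_le_ofReal.2 ?_)
    have hexp : Real.exp (-1) ≤ Real.exp (-x ^ 2 / C) := by
      rw [Real.exp_le_exp, neg_div, neg_le_neg_iff, div_le_one hCpos]
      linarith
    have he : Real.exp 1 ≤ 3 := by linarith [Real.exp_one_lt_d9]
    have hinv : 1 ≤ 3 * Real.exp (-1) := by
      rw [Real.exp_neg, ← div_eq_mul_inv, le_div_iff₀ (Real.exp_pos 1)]; linarith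
    calc (1:ℝ) ≤ 3 * Real.exp (-1) := hinv
      _ ≤ C * Real.exp (-x ^ 2 / C) := by gcongr

theorem measure_threshold_le_mul_abs_le {Ω : Type*} [MeasurableSpace Ω] {P : Measure Ω}
    [IsProbabilityMeasure P] {q C₁ δ lam b : ℝ} {X : Ω → ℝ} {v : ℝ≥0} (k : ℕ) (hq : 2 < q)
    (hC₁ : 0 < C₁) (hqδ : 0 ≤ q * δ) (hlam : 0 < lam)
    (hlarge : 2 / (((2:ℝ) ^ (q - 2)) ^ 2 - 1) ≤ (8 * C₁)⁻¹ ^ 2 * lam ^ 2)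
    (hv : (v : ℝ) ≤ 2) (hX : P.map X = gaussianReal 0 v)
    (hb : 0 ≤ b) (hbC : b ≤ C₁ * (2:ℝ) ^ (-(q * (δ + k)))) :
    P {ω | ENNReal.ofReal (lam * (2:ℝ) ^ (-(q * δ) / 2) / 4 * 4⁻¹ ^ k) ≤
        ENNReal.ofReal (b * |X ω|)} ≤
      ENNReal.ofReal (2 * Real.exp (-((8 * C₁)⁻¹ ^ 2 * lam ^ 2)) * 4⁻¹ ^ k) := by
  set R : ℝ := (2:ℝ) ^ (q - 2)
  have hR : 1 < R := Real.one_lt_rpow one_lt_two (by linarith)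
  have hsubG := hasSubgaussianMGF_of_map_eq_gaussianReal (c := 2) (by exact_mod_cast hv) hX
  calc _ ≤ ENNReal.ofReal (2 * Real.exp (-(lam * R ^ k / (4 * C₁)) ^ 2 / (2 * (2 : ℝ≥0)))) := by
        refine hsubG.measure_le_mul_abs_le hb hbC (by positivity) (by positivity) ?_
        calc C₁ * 2 ^ (-(q * (δ + k))) * (lam * R ^ k / (4 * C₁))
            = lam / 4 * (2 ^ (-(q * (δ + k))) * R ^ k) := by field_simp
          _ ≤ lam / 4 * (2 ^ (-(q * δ) / 2) * 4⁻¹ ^ k) :=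
              mul_le_mul_of_nonneg_left (two_rpow_neg_mul_add_mul_pow_le hqδ k) (by positivity)
          _ = _ := by ring
    _ ≤ _ := by
        have hexponent : -(lam * R ^ k / (4 * C₁)) ^ 2 / (2 * ((2 : ℝ≥0) : ℝ))
            = -((8 * C₁)⁻¹ ^ 2 * lam ^ 2 * (R ^ 2) ^ k) := by
          simp only [NNReal.coe_ofNat]; field_simp; ring
        rw [hexponent, mul_assoc (2:ℝ)]
        gcongr ENNReal.ofReal (2 * ?_)
        exact Real.exp_neg_mul_pow_le_mul_four_inv_pow (one_lt_pow₀ hR two_ne_zero) hlarge k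

theorem measure_tsum_mul_abs_ge_le {q C₁ : ℝ} (hq : 2 < q) (hC₁ : 0 < C₁) {l₁ l₀ : ℕ}
    (hl : l₁ ≤ l₀) {Ω : Type*} [MeasurableSpace Ω] {P : Measure Ω} [IsProbabilityMeasure P]
    {a : ℕ → ℕ → Ω → ℝ} {b : ℕ → ℕ → ℝ}
    (hgauss : ∀ l m, l₀ ≤ l → 1 ≤ m → m ≤ 2 ^ (l - l₀) →
      ∃ v : NNReal, (v : ℝ) ≤ 2 ∧ Measure.map (a l m) P = gaussianReal 0 v)
    (hb : ∀ l m, 0 ≤ b l m ∧ b l m ≤ C₁ * (2:ℝ) ^ (-(q * ((l : ℝ) - (l₁ : ℝ)))))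
    {lam : ℝ} (hlam : 0 < lam)
    (hlarge : 2 / (((2:ℝ) ^ (q - 2)) ^ 2 - 1) ≤ (8 * C₁)⁻¹ ^ 2 * lam ^ 2) :
    P {ω | ENNReal.ofReal (lam * (2:ℝ) ^ (-(q * ((l₀ : ℝ) - (l₁ : ℝ))) / 2)) ≤
        ∑' p : DyadicIndex l₀, ENNReal.ofReal (b p.1.1 p.1.2 * |a p.1.1 p.1.2 ω|)} ≤
      ENNReal.ofReal (4 * Real.exp (-((8 * C₁)⁻¹ ^ 2 * lam ^ 2))) := by
  set δ : ℝ := (l₀ : ℝ) - l₁ with hδ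
  set t : ℝ := (2:ℝ) ^ (-(q * δ) / 2)
  set E : ℝ := Real.exp (-((8 * C₁)⁻¹ ^ 2 * lam ^ 2))
  have hqδ : 0 ≤ q * δ := mul_nonneg (by linarith) (by simpa [hδ] using hl)
  have hthresholds : ∑' p : DyadicIndex l₀, ENNReal.ofReal (lam * t / 4 * 4⁻¹ ^ (p.1.1 - l₀)) <
      ENNReal.ofReal (lam * t) := by
    have hlt : 0 < lam * t := by positivity
    rw [tsum_dyadicIndex l₀ fun k => ENNReal.ofReal (lam * t / 4 * 4⁻¹ ^ k),
      ENNReal.tsum_two_pow_mul_ofReal_mul_four_inv_pow (by positivity),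
      ENNReal.ofReal_lt_ofReal_iff hlt]
    linarith
  have hterm (p : DyadicIndex l₀) :
      P {ω | ENNReal.ofReal (lam * t / 4 * 4⁻¹ ^ (p.1.1 - l₀)) ≤
          ENNReal.ofReal (b p.1.1 p.1.2 * |a p.1.1 p.1.2 ω|)} ≤
        ENNReal.ofReal (2 * E * 4⁻¹ ^ (p.1.1 - l₀)) := by
    obtain ⟨⟨l, m⟩, hl₀, hm₁, hm₂⟩ := p
    obtain ⟨v, hv, hmap⟩ := hgauss l m hl₀ hm₁ hm₂
    have hdepth : (l : ℝ) - l₁ = δ + (l - l₀ : ℕ) := by push_cast [hδ, Nat.cast_sub hl₀]; ring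
    exact measure_threshold_le_mul_abs_le (l - l₀) hq hC₁ hqδ hlam hlarge hv hmap (hb l m).1
      (hdepth ▸ (hb l m).2)
  calc _ ≤ ∑' p : DyadicIndex l₀, P {ω | ENNReal.ofReal (lam * t / 4 * 4⁻¹ ^ (p.1.1 - l₀)) ≤
        ENNReal.ofReal (b p.1.1 p.1.2 * |a p.1.1 p.1.2 ω|)} :=
        measure_le_tsum_le_tsum_measure_le P hthresholds
    _ ≤ ∑' p : DyadicIndex l₀, ENNReal.ofReal (2 * E * 4⁻¹ ^ (p.1.1 - l₀)) :=
        ENNReal.tsum_le_tsum hterm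
    _ = ENNReal.ofReal (4 * E) := by
        rw [tsum_dyadicIndex l₀ fun k => ENNReal.ofReal (2 * E * 4⁻¹ ^ k),
          ENNReal.tsum_two_pow_mul_ofReal_mul_four_inv_pow (by positivity)]
        ring_nf

/-- Tail estimate for the decoupling variables `s_{i,k,j}`: for a jointly
independent family of centered Gaussians `a_{l,m}` (`l ≥ l₀`, `1 ≤ m ≤ 2^{l-l₀}`) of variance
at most `2`, and weights `0 ≤ b_{l,m} ≤ C₁ 2^{-q(l-l₁)}` with `q > 2`, for every `λ > 0`,
`P(Σ_{l,m} b_{l,m} |a_{l,m}| ≥ λ 2^{-q(l₀-l₁)/2}) ≤ C e^{-λ²/C}` with `C = C(q, C₁)`. -/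
theorem decoupling_tail_estimate (q C₁ : ℝ) (hq : 2 < q) (hC₁ : 0 < C₁) :
    ∃ C : ℝ, 0 < C ∧
      ∀ l₁ l₀ : ℕ, l₁ < l₀ →
      ∀ (Ω : Type) [MeasurableSpace Ω] (P : Measure Ω) [IsProbabilityMeasure P],
      ∀ (a : ℕ → ℕ → Ω → ℝ) (b : ℕ → ℕ → ℝ),
        (∀ l m, Measurable (a l m)) →
        iIndepFun
          (fun p : {p : ℕ × ℕ // l₀ ≤ p.1 ∧ 1 ≤ p.2 ∧ p.2 ≤ 2 ^ (p.1 - l₀)} =>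
            a p.val.1 p.val.2) P →
        (∀ l m, l₀ ≤ l → 1 ≤ m → m ≤ 2 ^ (l - l₀) →
          ∃ v : NNReal, (v : ℝ) ≤ 2 ∧ Measure.map (a l m) P = gaussianReal 0 v) →
        (∀ l m, 0 ≤ b l m ∧ b l m ≤ C₁ * (2:ℝ) ^ (-(q * ((l : ℝ) - (l₁ : ℝ))))) →
        ∀ lam : ℝ, 0 < lam →
          P {ω | ENNReal.ofReal (lam * (2:ℝ) ^ (-(q * ((l₀ : ℝ) - (l₁ : ℝ))) / 2)) ≤
              ∑' p : {p : ℕ × ℕ // l₀ ≤ p.1 ∧ 1 ≤ p.2 ∧ p.2 ≤ 2 ^ (p.1 - l₀)},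
                ENNReal.ofReal (b p.val.1 p.val.2 * |a p.val.1 p.val.2 ω|)} ≤
            ENNReal.ofReal (C * Real.exp (-lam ^ 2 / C)) := by
  have hr : 1 < ((2:ℝ) ^ (q - 2)) ^ 2 :=
    one_lt_pow₀ (Real.one_lt_rpow one_lt_two (by linarith)) two_ne_zero
  have hγ : 0 < (8 * C₁)⁻¹ ^ 2 := by positivity
  obtain ⟨C, hC, hbound⟩ := exists_pos_forall_le_ofReal_mul_exp_neg_sq_div (A := 4)
    (Λ := 2 / (((2:ℝ) ^ (q - 2)) ^ 2 - 1) / (8 * C₁)⁻¹ ^ 2) (by norm_num) hγ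
    (by have := sub_pos.2 hr; positivity)
  refine ⟨C, hC, fun l₁ l₀ hl Ω _ P _ a b _ _ hgauss hb lam hlam =>
    hbound lam _ prob_le_one fun hlarge => ?_⟩
  exact measure_tsum_mul_abs_ge_le hq hC₁ hl.le hgauss hb hlam
    (by rwa [div_le_iff₀' hγ] at hlarge)
end

section
/- Let M, W, M₁, M₂, Y be random variables on a probability space with M₁ > 0 and M₂ > 0 almost surely, and let c > 0 and q > 0. Assume: W has the same distribution as M; M₁ and M₂ each have the same distribution as M; M₁ and M₂ are independent; Y is independent of the pair (M₁, M₂); and W ≥ c·e^Y·√(M₁·M₂) almost surely. Then E[ M^{−2q} ] ≤ c^{−2q} · E[ e^{−2qY} ] · ( E[ M^{−q} ] )², as an inequality in [0,∞]. -/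
/-!
Pass to `W`, which has the law of `M`. Raising `W ≥ c e^Y √(M₁ M₂)` to the negative power `-2q`
gives `W^{-2q} ≤ c^{-2q} e^{-2qY} M₁^{-q} M₂^{-q}`; taking expectations, the independence of `Y`
from `(M₁, M₂)` and of `M₁` from `M₂` factors the right-hand side, and each factor `E[Mᵢ^{-q}]`
equals `E[M^{-q}]`.
-/

open MeasureTheory ProbabilityTheory

theorem rpow_neg_two_mul_le_of_mul_exp_mul_sqrt_le {a b c y w q : ℝ} (ha : 0 < a) (hb : 0 < b)
    (hc : 0 < c) (hq : 0 ≤ q) (h : c * Real.exp y * Real.sqrt (a * b) ≤ w) :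
    w ^ (-(2 * q)) ≤ c ^ (-(2 * q)) * (Real.exp (-(2 * q) * y) * (a ^ (-q) * b ^ (-q))) := by
  have hab : 0 < a * b := mul_pos ha hb
  have hpos : 0 < c * Real.exp y * Real.sqrt (a * b) := by positivity
  have hpow : (c * Real.exp y * Real.sqrt (a * b)) ^ (-(2 * q))
      = c ^ (-(2 * q)) * (Real.exp (-(2 * q) * y) * (a ^ (-q) * b ^ (-q))) := by
    rw [Real.mul_rpow (by positivity) (Real.sqrt_nonneg _), Real.mul_rpow hc.le (by positivity),
      Real.sqrt_eq_rpow, ← Real.rpow_mul hab.le, ← Real.exp_mul, mul_comm y,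
      show (1 / 2 : ℝ) * (-(2 * q)) = -q by ring, Real.mul_rpow ha.le hb.le, mul_assoc]
  exact hpow ▸ Real.rpow_le_rpow_of_nonpos hpos h (by linarith)

theorem lintegral_comp_mul_comp_eq_sq_of_identDistrib {Ω β : Type*} [MeasurableSpace Ω]
    [MeasurableSpace β] {μ : Measure Ω} {X X₁ X₂ : Ω → β} {f : β → ENNReal} (hf : Measurable f)
    (hind : IndepFun X₁ X₂ μ) (h₁ : IdentDistrib X₁ X μ μ) (h₂ : IdentDistrib X₂ X μ μ) :
    ∫⁻ ω, f (X₁ ω) * f (X₂ ω) ∂μ = (∫⁻ ω, f (X ω) ∂μ) ^ 2 := by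
  calc ∫⁻ ω, f (X₁ ω) * f (X₂ ω) ∂μ = (∫⁻ ω, f (X₁ ω) ∂μ) * ∫⁻ ω, f (X₂ ω) ∂μ :=
        lintegral_mul_eq_lintegral_mul_lintegral_of_indepFun''
          (hf.comp_aemeasurable h₁.aemeasurable_fst) (hf.comp_aemeasurable h₂.aemeasurable_fst)
          (hind.comp hf hf)
    _ = (∫⁻ ω, f (X ω) ∂μ) ^ 2 := by
        rw [sq]
        congr 1
        exacts [(h₁.comp hf).lintegral_eq, (h₂.comp hf).lintegral_eq]

theorem negative_moment_bootstrap_general {Ω : Type} [MeasurableSpace Ω]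
    (P : Measure Ω)
    (M W M₁ M₂ Y : Ω → ℝ)
    (hYmeas : Measurable Y)
    (hM₁pos : ∀ᵐ ω ∂P, 0 < M₁ ω) (hM₂pos : ∀ᵐ ω ∂P, 0 < M₂ ω)
    (c q : ℝ) (hc : 0 < c) (hq : 0 < q)
    (hWM : IdentDistrib W M P P)
    (hM₁M : IdentDistrib M₁ M P P)
    (hM₂M : IdentDistrib M₂ M P P)
    (hindep : IndepFun M₁ M₂ P)
    (hYindep : IndepFun Y (fun ω => (M₁ ω, M₂ ω)) P)
    (hdom : ∀ᵐ ω ∂P, c * Real.exp (Y ω) * Real.sqrt (M₁ ω * M₂ ω) ≤ W ω) :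
    (∫⁻ ω, ENNReal.ofReal (M ω ^ (-(2 * q))) ∂P) ≤
      ENNReal.ofReal (c ^ (-(2 * q))) *
        (∫⁻ ω, ENNReal.ofReal (Real.exp (-(2 * q) * Y ω)) ∂P) *
        (∫⁻ ω, ENNReal.ofReal (M ω ^ (-q)) ∂P) ^ 2 := by
  set F : ℝ → ENNReal := fun y => ENNReal.ofReal (Real.exp (-(2 * q) * y))
  set G : ℝ → ENNReal := fun x => ENNReal.ofReal (x ^ (-q))
  have hF : Measurable F := by fun_prop
  have hG : Measurable G := by fun_prop
  have hGG : Measurable fun p : ℝ × ℝ => G p.1 * G p.2 := by fun_prop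
  have hpointwise : ∀ᵐ ω ∂P, ENNReal.ofReal (W ω ^ (-(2 * q))) ≤
      ENNReal.ofReal (c ^ (-(2 * q))) * (F (Y ω) * (G (M₁ ω) * G (M₂ ω))) := by
    filter_upwards [hM₁pos, hM₂pos, hdom] with ω h₁ h₂ hω
    refine (ENNReal.ofReal_le_ofReal
      (rpow_neg_two_mul_le_of_mul_exp_mul_sqrt_le h₁ h₂ hc hq.le hω)).trans_eq ?_
    rw [ENNReal.ofReal_mul (by positivity), ENNReal.ofReal_mul (by positivity),
      ENNReal.ofReal_mul (by positivity)]
  calc (∫⁻ ω, ENNReal.ofReal (M ω ^ (-(2 * q))) ∂P)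
      = ∫⁻ ω, ENNReal.ofReal (W ω ^ (-(2 * q))) ∂P :=
        (hWM.comp (by fun_prop : Measurable fun x : ℝ => ENNReal.ofReal (x ^ (-(2 * q))))
          ).lintegral_eq.symm
    _ ≤ ∫⁻ ω, ENNReal.ofReal (c ^ (-(2 * q))) * (F (Y ω) * (G (M₁ ω) * G (M₂ ω))) ∂P :=
        lintegral_mono_ae hpointwise
    _ = ENNReal.ofReal (c ^ (-(2 * q))) *
          ((∫⁻ ω, F (Y ω) ∂P) * ∫⁻ ω, G (M₁ ω) * G (M₂ ω) ∂P) := by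
        have hfactor := lintegral_mul_eq_lintegral_mul_lintegral_of_indepFun''
          (hF.comp hYmeas).aemeasurable
          (hGG.comp_aemeasurable (hM₁M.aemeasurable_fst.prodMk hM₂M.aemeasurable_fst))
          (hYindep.comp hF hGG)
        rw [lintegral_const_mul' _ _ ENNReal.ofReal_ne_top]
        exact congrArg _ hfactor
    _ = _ := by
        rw [lintegral_comp_mul_comp_eq_sq_of_identDistrib hG hindep hM₁M hM₂M, mul_assoc]

/-- Bootstrapping step for negative moments: if `W ~ M`, `M₁, M₂` are
independent copies of `M` (a.s. positive), `Y` is independent of the pair `(M₁, M₂)`, and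
`W ≥ c e^Y √(M₁ M₂)` a.s., then `E[M^{-2q}] ≤ c^{-2q} E[e^{-2qY}] (E[M^{-q}])²` in `[0,∞]`. -/
theorem negative_moment_bootstrap {Ω : Type} [MeasurableSpace Ω]
    (P : Measure Ω) [IsProbabilityMeasure P]
    (M W M₁ M₂ Y : Ω → ℝ)
    (hMmeas : Measurable M) (hWmeas : Measurable W) (hM₁meas : Measurable M₁)
    (hM₂meas : Measurable M₂) (hYmeas : Measurable Y)
    (hM₁pos : ∀ᵐ ω ∂P, 0 < M₁ ω) (hM₂pos : ∀ᵐ ω ∂P, 0 < M₂ ω)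
    (c q : ℝ) (hc : 0 < c) (hq : 0 < q)
    (hWM : IdentDistrib W M P P)
    (hM₁M : IdentDistrib M₁ M P P)
    (hM₂M : IdentDistrib M₂ M P P)
    (hindep : IndepFun M₁ M₂ P)
    (hYindep : IndepFun Y (fun ω => (M₁ ω, M₂ ω)) P)
    (hdom : ∀ᵐ ω ∂P, c * Real.exp (Y ω) * Real.sqrt (M₁ ω * M₂ ω) ≤ W ω) :
    (∫⁻ ω, ENNReal.ofReal (M ω ^ (-(2 * q))) ∂P) ≤
      ENNReal.ofReal (c ^ (-(2 * q))) *
        (∫⁻ ω, ENNReal.ofReal (Real.exp (-(2 * q) * Y ω)) ∂P) *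
        (∫⁻ ω, ENNReal.ofReal (M ω ^ (-q)) ∂P) ^ 2 :=
  negative_moment_bootstrap_general P M W M₁ M₂ Y hYmeas hM₁pos hM₂pos c q hc hq hWM hM₁M hM₂M
    hindep hYindep hdom
end
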